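/- arXiv:2012.08332 — 7 statements merged into one kernel-verified Lean document; each statement's English description precedes it below -/
import Mathlib

section
/- Let P be an hv-convex polyomino and let v ∈ ℤ². If there exist three points w₁, w₂, w₃ ∈ P such that Z_i(v) ∩ {w₁, w₂, w₃} ≠ ∅ for every i ∈ {0,1,2,3}, then v ∈ P. -/
/-- The four quadrant regions `Z_i(v)` in `ℤ²`. -/
def Zq (i : Fin 4) (v : ℤ × ℤ) : Set (ℤ × ℤ) :=
  match i with
  | 0 => {p | p.1 ≤ v.1 ∧ p.2 ≤ v.2}
  | 1 => {p | v.1 ≤ p.1 ∧ p.2 ≤ v.2}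
  | 2 => {p | v.1 ≤ p.1 ∧ v.2 ≤ p.2}
  | 3 => {p | p.1 ≤ v.1 ∧ v.2 ≤ p.2}

/-- An hv-convex polyomino: a finite nonempty 4-connected subset of `ℤ²`
whose rows and columns are intervals of consecutive integers. -/
def IsHvPolyomino (P : Set (ℤ × ℤ)) : Prop :=
  P.Finite ∧ P.Nonempty ∧
    (∀ p ∈ P, ∀ q ∈ P,
      Relation.ReflTransGen
        (fun a b : ℤ × ℤ => b ∈ P ∧ (a.1 - b.1).natAbs + (a.2 - b.2).natAbs = 1) p q) ∧
    (∀ a₁ a₂ a c : ℤ, (a₁, c) ∈ P → (a₂, c) ∈ P → a₁ ≤ a → a ≤ a₂ → (a, c) ∈ P) ∧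
    (∀ b₁ b₂ b c : ℤ, (c, b₁) ∈ P → (c, b₂) ∈ P → b₁ ≤ b → b ≤ b₂ → (c, b) ∈ P)

private lemma mem_of_path {P : Set (ℤ × ℤ)} {p q : ℤ × ℤ} (hp : p ∈ P)
    (h : Relation.ReflTransGen
      (fun a b : ℤ × ℤ => b ∈ P ∧ (a.1 - b.1).natAbs + (a.2 - b.2).natAbs = 1) p q) :
    q ∈ P := by
  induction h with
  | refl => exact hp
  | tail _ hstep _ => exact hstep.1

private lemma cross {P : Set (ℤ × ℤ)} {p q : ℤ × ℤ} (hp : p ∈ P)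
    (h : Relation.ReflTransGen
      (fun a b : ℤ × ℤ => b ∈ P ∧ (a.1 - b.1).natAbs + (a.2 - b.2).natAbs = 1) p q)
    (Q : ℤ × ℤ → Prop) (hQp : Q p) :
    ¬ Q q → ∃ t t', t ∈ P ∧ t' ∈ P ∧
      (t.1 - t'.1).natAbs + (t.2 - t'.2).natAbs = 1 ∧ Q t ∧ ¬ Q t' := by
  induction h with
  | refl => exact fun hq => absurd hQp hq
  | @tail b c hpb hbc ih =>
    intro hq
    by_cases hb : Q b
    · exact ⟨b, c, mem_of_path hp hpb, hbc.1, hbc.2, hb, hq⟩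
    · exact ih hb

private lemma exists_col {P : Set (ℤ × ℤ)} {p q : ℤ × ℤ} {x : ℤ} (hp : p ∈ P)
    (h : Relation.ReflTransGen
      (fun a b : ℤ × ℤ => b ∈ P ∧ (a.1 - b.1).natAbs + (a.2 - b.2).natAbs = 1) p q)
    (h1 : p.1 ≤ x) (h2 : x ≤ q.1) : ∃ s ∈ P, s.1 = x := by
  by_cases hqx : q.1 ≤ x
  · exact ⟨q, mem_of_path hp h, le_antisymm hqx h2⟩
  · obtain ⟨t, t', htP, _, hstep, hQt, hQt'⟩ :=
      cross hp h (fun r => r.1 ≤ x) h1 hqx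
    exact ⟨t, htP, by omega⟩

private lemma exists_row {P : Set (ℤ × ℤ)} {p q : ℤ × ℤ} {y : ℤ} (hp : p ∈ P)
    (h : Relation.ReflTransGen
      (fun a b : ℤ × ℤ => b ∈ P ∧ (a.1 - b.1).natAbs + (a.2 - b.2).natAbs = 1) p q)
    (h1 : p.2 ≤ y) (h2 : y ≤ q.2) : ∃ s ∈ P, s.2 = y := by
  by_cases hqy : q.2 ≤ y
  · exact ⟨q, mem_of_path hp h, le_antisymm hqy h2⟩
  · obtain ⟨t, t', htP, _, hstep, hQt, hQt'⟩ :=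
      cross hp h (fun r => r.2 ≤ y) h1 hqy
    exact ⟨t, htP, by omega⟩

/-- if `P` is an hv-convex polyomino, `v ∈ ℤ²`, and `w₁, w₂, w₃ ∈ P` are such
that every quadrant `Z_i(v)` meets `{w₁, w₂, w₃}`, then `v ∈ P`. -/
theorem stmt0 (P : Set (ℤ × ℤ)) (hP : IsHvPolyomino P) (v w₁ w₂ w₃ : ℤ × ℤ)
    (h₁ : w₁ ∈ P) (h₂ : w₂ ∈ P) (h₃ : w₃ ∈ P)
    (h : ∀ i : Fin 4, (Zq i v ∩ {w₁, w₂, w₃}).Nonempty) :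
    v ∈ P := by
  obtain ⟨-, -, conn, hconvH, hconvV⟩ := hP
  by_contra hv
  -- a point of P in each quadrant
  have hq : ∀ i : Fin 4, ∃ p ∈ P, p ∈ Zq i v := by
    intro i
    obtain ⟨p, hpz, hpw⟩ := h i
    refine ⟨p, ?_, hpz⟩
    simp only [Set.mem_insert_iff, Set.mem_singleton_iff] at hpw
    rcases hpw with rfl | rfl | rfl <;> assumption
  obtain ⟨p₀, hp₀, hz₀⟩ := hq 0
  obtain ⟨p₁, hp₁, hz₁⟩ := hq 1
  obtain ⟨p₂, hp₂, hz₂⟩ := hq 2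
  obtain ⟨p₃, hp₃, hz₃⟩ := hq 3
  simp only [Zq, Set.mem_setOf_eq] at hz₀ hz₁ hz₂ hz₃
  obtain ⟨hz₀1, hz₀2⟩ := hz₀
  obtain ⟨hz₁1, hz₁2⟩ := hz₁
  obtain ⟨hz₂1, hz₂2⟩ := hz₂
  obtain ⟨hz₃1, hz₃2⟩ := hz₃
  -- a point of P on the column of v, and one on the row of v
  obtain ⟨s, hsP, hs1⟩ := exists_col hp₀ (conn p₀ hp₀ p₁ hp₁) hz₀1 hz₁1
  obtain ⟨r, hrP, hr2⟩ := exists_row hp₀ (conn p₀ hp₀ p₃ hp₃) hz₀2 hz₃2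
  -- v itself is not on the column/row, so each is strictly on one side
  have hsv : s.2 ≠ v.2 := by
    intro hs2
    have : v = s := Prod.ext_iff.mpr ⟨hs1.symm, hs2.symm⟩
    exact hv (this ▸ hsP)
  have hrv : r.1 ≠ v.1 := by
    intro hr1
    have : v = r := Prod.ext_iff.mpr ⟨hr1.symm, hr2.symm⟩
    exact hv (this ▸ hrP)
  rcases hsv.lt_or_gt with hslt | hsgt
  · -- column points all below v
    have hcol : ∀ u ∈ P, u.1 = v.1 → u.2 < v.2 := by
      intro u hu h1
      by_contra hge
      push_neg at hge
      have hs' : (v.1, s.2) ∈ P := by rw [← hs1]; exact hsP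
      have hu' : (v.1, u.2) ∈ P := by rw [← h1]; exact hu
      exact hv (hconvV s.2 u.2 v.2 v.1 hs' hu' hslt.le hge)
    rcases hrv.lt_or_gt with hrlt | hrgt
    · -- row points all left of v ; use the point in Z₂
      have hrow : ∀ u ∈ P, u.2 = v.2 → u.1 < v.1 := by
        intro u hu h2
        by_contra hge
        push_neg at hge
        have hr' : (r.1, v.2) ∈ P := by rw [← hr2]; exact hrP
        have hu' : (u.1, v.2) ∈ P := by rw [← h2]; exact hu
        exact hv (hconvH r.1 u.1 v.1 v.2 hr' hu' hrlt.le hge)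
      have hq1 : v.1 < p₂.1 := lt_of_le_of_ne hz₂1 (fun e => absurd (hcol p₂ hp₂ e.symm) (by omega))
      have hq2 : v.2 < p₂.2 := lt_of_le_of_ne hz₂2 (fun e => absurd (hrow p₂ hp₂ e.symm) (by omega))
      obtain ⟨t, t', htP, _, hstep, hQt, hQt'⟩ :=
        cross hsP (conn s hsP p₂ hp₂) (fun u => u.1 ≤ v.1 ∨ u.2 ≤ v.2)
          (Or.inl hs1.le) (fun hor => by rcases hor with hh | hh <;> omega)
      simp only [not_or, not_le] at hQt'
      rcases hQt with ht | ht
      · have h1 : t.1 = v.1 ∧ t.2 = t'.2 := by omega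
        have := hcol t htP h1.1
        omega
      · have h2 : t.2 = v.2 ∧ t.1 = t'.1 := by omega
        have := hrow t htP h2.1
        omega
    · -- row points all right of v ; use the point in Z₃
      have hrow : ∀ u ∈ P, u.2 = v.2 → v.1 < u.1 := by
        intro u hu h2
        by_contra hge
        push_neg at hge
        have hr' : (r.1, v.2) ∈ P := by rw [← hr2]; exact hrP
        have hu' : (u.1, v.2) ∈ P := by rw [← h2]; exact hu
        exact hv (hconvH u.1 r.1 v.1 v.2 hu' hr' hge hrgt.le)
      have hq1 : p₃.1 < v.1 := lt_of_le_of_ne hz₃1 (fun e => absurd (hcol p₃ hp₃ e) (by omega))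
      have hq2 : v.2 < p₃.2 := lt_of_le_of_ne hz₃2 (fun e => absurd (hrow p₃ hp₃ e.symm) (by omega))
      obtain ⟨t, t', htP, _, hstep, hQt, hQt'⟩ :=
        cross hsP (conn s hsP p₃ hp₃) (fun u => v.1 ≤ u.1 ∨ u.2 ≤ v.2)
          (Or.inl hs1.ge) (fun hor => by rcases hor with hh | hh <;> omega)
      simp only [not_or, not_le] at hQt'
      rcases hQt with ht | ht
      · have h1 : t.1 = v.1 ∧ t.2 = t'.2 := by omega
        have := hcol t htP h1.1
        omega
      · have h2 : t.2 = v.2 ∧ t.1 = t'.1 := by omega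
        have := hrow t htP h2.1
        omega
  · -- column points all above v
    have hcol : ∀ u ∈ P, u.1 = v.1 → v.2 < u.2 := by
      intro u hu h1
      by_contra hge
      push_neg at hge
      have hs' : (v.1, s.2) ∈ P := by rw [← hs1]; exact hsP
      have hu' : (v.1, u.2) ∈ P := by rw [← h1]; exact hu
      exact hv (hconvV u.2 s.2 v.2 v.1 hu' hs' hge hsgt.le)
    rcases hrv.lt_or_gt with hrlt | hrgt
    · -- row points all left of v ; use the point in Z₁
      have hrow : ∀ u ∈ P, u.2 = v.2 → u.1 < v.1 := by
        intro u hu h2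
        by_contra hge
        push_neg at hge
        have hr' : (r.1, v.2) ∈ P := by rw [← hr2]; exact hrP
        have hu' : (u.1, v.2) ∈ P := by rw [← h2]; exact hu
        exact hv (hconvH r.1 u.1 v.1 v.2 hr' hu' hrlt.le hge)
      have hq1 : v.1 < p₁.1 := lt_of_le_of_ne hz₁1 (fun e => absurd (hcol p₁ hp₁ e.symm) (by omega))
      have hq2 : p₁.2 < v.2 := lt_of_le_of_ne hz₁2 (fun e => absurd (hrow p₁ hp₁ e) (by omega))
      obtain ⟨t, t', htP, _, hstep, hQt, hQt'⟩ :=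
        cross hsP (conn s hsP p₁ hp₁) (fun u => u.1 ≤ v.1 ∨ v.2 ≤ u.2)
          (Or.inl hs1.le) (fun hor => by rcases hor with hh | hh <;> omega)
      simp only [not_or, not_le] at hQt'
      rcases hQt with ht | ht
      · have h1 : t.1 = v.1 ∧ t.2 = t'.2 := by omega
        have := hcol t htP h1.1
        omega
      · have h2 : t.2 = v.2 ∧ t.1 = t'.1 := by omega
        have := hrow t htP h2.1
        omega
    · -- row points all right of v ; use the point in Z₀
      have hrow : ∀ u ∈ P, u.2 = v.2 → v.1 < u.1 := by
        intro u hu h2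
        by_contra hge
        push_neg at hge
        have hr' : (r.1, v.2) ∈ P := by rw [← hr2]; exact hrP
        have hu' : (u.1, v.2) ∈ P := by rw [← h2]; exact hu
        exact hv (hconvH u.1 r.1 v.1 v.2 hu' hr' hge hrgt.le)
      have hq1 : p₀.1 < v.1 := lt_of_le_of_ne hz₀1 (fun e => absurd (hcol p₀ hp₀ e) (by omega))
      have hq2 : p₀.2 < v.2 := lt_of_le_of_ne hz₀2 (fun e => absurd (hrow p₀ hp₀ e) (by omega))
      obtain ⟨t, t', htP, _, hstep, hQt, hQt'⟩ :=
        cross hsP (conn s hsP p₀ hp₀) (fun u => v.1 ≤ u.1 ∨ v.2 ≤ u.2)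
          (Or.inl hs1.ge) (fun hor => by rcases hor with hh | hh <;> omega)
      simp only [not_or, not_le] at hQt'
      rcases hQt with ht | ht
      · have h1 : t.1 = v.1 ∧ t.2 = t'.2 := by omega
        have := hcol t htP h1.1
        omega
      · have h2 : t.2 = v.2 ∧ t.1 = t'.1 := by omega
        have := hrow t htP h2.1
        omega
end

section
/- Let (S⁰, S¹) be an hv-switching with S⁰ nonempty, and let v ∈ S⁰. Then there is at most one index i ∈ {0,1,2,3} such that Z_i(v) ∩ S¹ = ∅; i.e., v has at most one free region. The symmetric statement holds for points of S¹. -/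
/-- Horizontal projection: the number of points of `S` on the horizontal line `y = c`. -/
noncomputable def hProj (S : Set (ℤ × ℤ)) (c : ℤ) : ℕ := {p ∈ S | p.2 = c}.ncard

/-- Vertical projection: the number of points of `S` on the vertical line `x = c`. -/
noncomputable def vProj (S : Set (ℤ × ℤ)) (c : ℤ) : ℕ := {p ∈ S | p.1 = c}.ncard

/-- An hv-switching: a pair of disjoint finite sets of equal cardinality having the same
horizontal and vertical projections. -/
def IsHvSwitching (S0 S1 : Set (ℤ × ℤ)) : Prop :=
  S0.Finite ∧ S1.Finite ∧ Disjoint S0 S1 ∧ S0.ncard = S1.ncard ∧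
    (∀ c : ℤ, hProj S0 c = hProj S1 c) ∧ (∀ c : ℤ, vProj S0 c = vProj S1 c)

/-- Key lemma: if `S0` is finite and has the same projections as `S1`, then each point of
`S0` has at most one quadrant free of `S1`. -/
lemma key_free_region (S0 S1 : Set (ℤ × ℤ)) (hfin0 : S0.Finite)
    (hh : ∀ c : ℤ, hProj S0 c = hProj S1 c) (hvp : ∀ c : ℤ, vProj S0 c = vProj S1 c)
    (v : ℤ × ℤ) (hv : v ∈ S0) :
    ∀ i j : Fin 4, Zq i v ∩ S1 = ∅ → Zq j v ∩ S1 = ∅ → i = j := by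
  have hp : {p ∈ S1 | p.2 = v.2}.Nonempty := by
    apply Set.nonempty_of_ncard_ne_zero
    show hProj S1 v.2 ≠ 0
    rw [← hh]
    unfold hProj
    rw [Ne, Set.ncard_eq_zero (hfin0.subset (Set.sep_subset _ _))]
    exact Set.Nonempty.ne_empty ⟨v, hv, rfl⟩
  have hq : {p ∈ S1 | p.1 = v.1}.Nonempty := by
    apply Set.nonempty_of_ncard_ne_zero
    show vProj S1 v.1 ≠ 0
    rw [← hvp]
    unfold vProj
    rw [Ne, Set.ncard_eq_zero (hfin0.subset (Set.sep_subset _ _))]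
    exact Set.Nonempty.ne_empty ⟨v, hv, rfl⟩
  obtain ⟨⟨pa, pb⟩, hpS, hpb⟩ := hp
  obtain ⟨⟨qa, qb⟩, hqS, hqa⟩ := hq
  simp only at hpb hqa
  intro i j hi hj
  have Hp : ∀ k : Fin 4, Zq k v ∩ S1 = ∅ → (pa, pb) ∉ Zq k v := fun k h hm =>
    Set.eq_empty_iff_forall_notMem.mp h _ ⟨hm, hpS⟩
  have Hq : ∀ k : Fin 4, Zq k v ∩ S1 = ∅ → (qa, qb) ∉ Zq k v := fun k h hm =>
    Set.eq_empty_iff_forall_notMem.mp h _ ⟨hm, hqS⟩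
  have hpi := Hp i hi
  have hpj := Hp j hj
  have hqi := Hq i hi
  have hqj := Hq j hj
  clear Hp Hq hi hj
  fin_cases i <;> fin_cases j <;>
    first
      | rfl
      | (exfalso
         simp only [Zq, Set.mem_setOf_eq] at hpi hpj hqi hqj
         omega)

/-- in an hv-switching `(S⁰, S¹)` with `S⁰` nonempty, every `v ∈ S⁰` has at
most one free region (at most one `i` with `Z_i(v) ∩ S¹ = ∅`), and symmetrically for
points of `S¹`. -/
theorem stmt4 (S0 S1 : Set (ℤ × ℤ)) (h : IsHvSwitching S0 S1) (hne : S0.Nonempty)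
    (v : ℤ × ℤ) (hv : v ∈ S0) :
    (∀ i j : Fin 4, Zq i v ∩ S1 = ∅ → Zq j v ∩ S1 = ∅ → i = j) ∧
    (∀ u ∈ S1, ∀ i j : Fin 4, Zq i u ∩ S0 = ∅ → Zq j u ∩ S0 = ∅ → i = j) := by
  obtain ⟨hfin0, hfin1, -, -, hh, hvp⟩ := h
  exact ⟨key_free_region S0 S1 hfin0 hh hvp v hv,
    fun u hu => key_free_region S1 S0 hfin1 (fun c => (hh c).symm)
      (fun c => (hvp c).symm) u hu⟩
end

section
/- Let P₁ and P₂ be hv-convex polyominoes with the same horizontal and vertical projections and P₁ ≠ P₂, and set S⁰ = P₁ \ P₂ and S¹ = P₂ \ P₁. Then for every point x ∈ S⁰ there exists exactly one index i ∈ {0,1,2,3} with Z_i(x) ∩ S¹ = ∅, and for every x ∈ S¹ there exists exactly one i with Z_i(x) ∩ S⁰ = ∅. In particular, (S⁰, S¹) is an hv-convex switching. -/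
/-- An hv-convex switching: an hv-switching in which every point has a free region,
i.e. a quadrant containing no point of the other component. -/
def IsHvConvexSwitching (S0 S1 : Set (ℤ × ℤ)) : Prop :=
  IsHvSwitching S0 S1 ∧ (∀ x ∈ S0, ∃ i : Fin 4, Zq i x ∩ S1 = ∅) ∧
    (∀ x ∈ S1, ∃ i : Fin 4, Zq i x ∩ S0 = ∅)

abbrev PStep (P : Set (ℤ × ℤ)) (a b : ℤ × ℤ) : Prop :=
  b ∈ P ∧ (a.1 - b.1).natAbs + (a.2 - b.2).natAbs = 1

lemma ivtV (P : Set (ℤ × ℤ)) (c : ℤ) {p q : ℤ × ℤ}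
    (hpq : Relation.ReflTransGen (PStep P) p q) (hq2 : c ≤ q.2) :
    p ∈ P → p.2 ≤ c → ∃ w ∈ P, w.2 = c := by
  induction hpq using Relation.ReflTransGen.head_induction_on with
  | refl => exact fun hp hle => ⟨q, hp, le_antisymm hle hq2⟩
  | @head u v h' _ ih =>
    intro hu hle
    obtain ⟨hv, hd⟩ := h'
    by_cases h : v.2 ≤ c
    · exact ih hv h
    · exact ⟨u, hu, by omega⟩

lemma ivtH (P : Set (ℤ × ℤ)) (c : ℤ) {p q : ℤ × ℤ}
    (hpq : Relation.ReflTransGen (PStep P) p q) (hq1 : c ≤ q.1) :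
    p ∈ P → p.1 ≤ c → ∃ w ∈ P, w.1 = c := by
  induction hpq using Relation.ReflTransGen.head_induction_on with
  | refl => exact fun hp hle => ⟨q, hp, le_antisymm hle hq1⟩
  | @head u v h' _ ih =>
    intro hu hle
    obtain ⟨hv, hd⟩ := h'
    by_cases h : v.1 ≤ c
    · exact ih hv h
    · exact ⟨u, hu, by omega⟩

lemma cross₁ (P : Set (ℤ × ℤ)) (a c : ℤ) {p q : ℤ × ℤ}
    (hpq : Relation.ReflTransGen (PStep P) p q) (hq : q.2 ≤ c)
    (hrow : ∀ w ∈ P, w.2 = c → a < w.1) :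
    p ∈ P → p.1 < a → c < p.2 → ∃ z ∈ P, z.1 = a ∧ c < z.2 := by
  induction hpq using Relation.ReflTransGen.head_induction_on with
  | refl => intro _ _ h2; omega
  | @head u v h' _ ih =>
    intro hu h1 h2
    obtain ⟨hv, hd⟩ := h'
    by_cases hv2 : v.2 ≤ c
    · exfalso; have := hrow v hv (by omega); omega
    · rcases lt_trichotomy v.1 a with h | h | h
      · exact ih hv h (by omega)
      · exact ⟨v, hv, h, by omega⟩
      · exfalso; omega

lemma cross₂ (P : Set (ℤ × ℤ)) (a c : ℤ) {p q : ℤ × ℤ}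
    (hpq : Relation.ReflTransGen (PStep P) p q) (hq : c ≤ q.2)
    (hrow : ∀ w ∈ P, w.2 = c → a < w.1) :
    p ∈ P → p.1 < a → p.2 < c → ∃ z ∈ P, z.1 = a ∧ z.2 < c := by
  induction hpq using Relation.ReflTransGen.head_induction_on with
  | refl => intro _ _ h2; omega
  | @head u v h' _ ih =>
    intro hu h1 h2
    obtain ⟨hv, hd⟩ := h'
    by_cases hv2 : c ≤ v.2
    · exfalso; have := hrow v hv (by omega); omega
    · rcases lt_trichotomy v.1 a with h | h | h
      · exact ih hv h (by omega)
      · exact ⟨v, hv, h, by omega⟩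
      · exfalso; omega

lemma cross₃ (P : Set (ℤ × ℤ)) (a c : ℤ) {p q : ℤ × ℤ}
    (hpq : Relation.ReflTransGen (PStep P) p q) (hq : q.2 ≤ c)
    (hrow : ∀ w ∈ P, w.2 = c → w.1 < a) :
    p ∈ P → a < p.1 → c < p.2 → ∃ z ∈ P, z.1 = a ∧ c < z.2 := by
  induction hpq using Relation.ReflTransGen.head_induction_on with
  | refl => intro _ _ h2; omega
  | @head u v h' _ ih =>
    intro hu h1 h2
    obtain ⟨hv, hd⟩ := h'
    by_cases hv2 : v.2 ≤ c
    · exfalso; have := hrow v hv (by omega); omega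
    · rcases lt_trichotomy a v.1 with h | h | h
      · exact ih hv h (by omega)
      · exact ⟨v, hv, h.symm, by omega⟩
      · exfalso; omega

lemma cross₄ (P : Set (ℤ × ℤ)) (a c : ℤ) {p q : ℤ × ℤ}
    (hpq : Relation.ReflTransGen (PStep P) p q) (hq : c ≤ q.2)
    (hrow : ∀ w ∈ P, w.2 = c → w.1 < a) :
    p ∈ P → a < p.1 → p.2 < c → ∃ z ∈ P, z.1 = a ∧ z.2 < c := by
  induction hpq using Relation.ReflTransGen.head_induction_on with
  | refl => intro _ _ h2; omega
  | @head u v h' _ ih =>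
    intro hu h1 h2
    obtain ⟨hv, hd⟩ := h'
    by_cases hv2 : c ≤ v.2
    · exfalso; have := hrow v hv (by omega); omega
    · rcases lt_trichotomy a v.1 with h | h | h
      · exact ih hv h (by omega)
      · exact ⟨v, hv, h.symm, by omega⟩
      · exfalso; omega

lemma all_quadrants_imp_mem (P : Set (ℤ × ℤ)) (hP : IsHvPolyomino P) (x : ℤ × ℤ)
    (h : ∀ i : Fin 4, (Zq i x ∩ P).Nonempty) : x ∈ P := by
  obtain ⟨-, -, hconn, hHc, hVc⟩ := hP
  obtain ⟨q0, hq0⟩ := h 0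
  obtain ⟨q1, hq1⟩ := h 1
  obtain ⟨q2, hq2⟩ := h 2
  obtain ⟨q3, hq3⟩ := h 3
  rw [show Zq 0 x = {p | p.1 ≤ x.1 ∧ p.2 ≤ x.2} from rfl] at hq0
  rw [show Zq 1 x = {p | x.1 ≤ p.1 ∧ p.2 ≤ x.2} from rfl] at hq1
  rw [show Zq 2 x = {p | x.1 ≤ p.1 ∧ x.2 ≤ p.2} from rfl] at hq2
  rw [show Zq 3 x = {p | p.1 ≤ x.1 ∧ x.2 ≤ p.2} from rfl] at hq3
  obtain ⟨⟨h00, h01⟩, hm0⟩ := hq0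
  obtain ⟨⟨h10, h11⟩, hm1⟩ := hq1
  obtain ⟨⟨h20, h21⟩, hm2⟩ := hq2
  obtain ⟨⟨h30, h31⟩, hm3⟩ := hq3
  by_contra hx
  have hx' : (x.1, x.2) ∉ P := by rwa [Prod.mk.eta]
  -- the row of x meets P
  obtain ⟨w, hw, hw2⟩ := ivtV P x.2 (hconn q1 hm1 q3 hm3) h31 hm1 h11
  -- the column of x meets P
  obtain ⟨t, ht, ht1⟩ := ivtH P x.1 (hconn q0 hm0 q2 hm2) h20 hm0 h00
  -- dichotomy for the row
  have hrowd : (∀ w' ∈ P, w'.2 = x.2 → x.1 < w'.1) ∨ (∀ w' ∈ P, w'.2 = x.2 → w'.1 < x.1) := by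
    by_contra hcon
    push_neg at hcon
    obtain ⟨⟨w₁, hw₁, hw₁2, hw₁1⟩, ⟨w₂, hw₂, hw₂2, hw₂1⟩⟩ := hcon
    have m1 : (w₂.1, x.2) ∈ P := by rw [← hw₂2]; rwa [Prod.mk.eta]
    have m2 : (w₁.1, x.2) ∈ P := by rw [← hw₁2]; rwa [Prod.mk.eta]
    exact hx' (hHc w₁.1 w₂.1 x.1 x.2 m2 m1 hw₁1 hw₂1)
  -- dichotomy for the column
  have hcold : (∀ z ∈ P, z.1 = x.1 → z.2 < x.2) ∨ (∀ z ∈ P, z.1 = x.1 → x.2 < z.2) := by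
    by_contra hcon
    push_neg at hcon
    obtain ⟨⟨z₁, hz₁, hz₁1, hz₁2⟩, ⟨z₂, hz₂, hz₂1, hz₂2⟩⟩ := hcon
    have m1 : (x.1, z₂.2) ∈ P := by rw [← hz₂1]; rwa [Prod.mk.eta]
    have m2 : (x.1, z₁.2) ∈ P := by rw [← hz₁1]; rwa [Prod.mk.eta]
    exact hx' (hVc z₂.2 z₁.2 x.2 x.1 m1 m2 hz₂2 hz₁2)
  rcases hrowd with hR | hL <;> rcases hcold with hB | hT
  · -- row strictly right, column strictly below: use q3 and cross₁
    have h3a : q3.1 < x.1 := lt_of_le_of_ne h30 (fun h => absurd (hB q3 hm3 h) (by omega))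
    have h3b : x.2 < q3.2 := lt_of_le_of_ne h31 (fun h => absurd (hR q3 hm3 h.symm) (by omega))
    obtain ⟨z, hz, hz1, hz2⟩ := cross₁ P x.1 x.2 (hconn q3 hm3 w hw) (le_of_eq hw2) hR hm3 h3a h3b
    exact absurd (hB z hz hz1) (by omega)
  · -- row strictly right, column strictly above: use q0 and cross₂
    have h0a : q0.1 < x.1 := lt_of_le_of_ne h00 (fun h => absurd (hT q0 hm0 h) (by omega))
    have h0b : q0.2 < x.2 := lt_of_le_of_ne h01 (fun h => absurd (hR q0 hm0 h) (by omega))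
    obtain ⟨z, hz, hz1, hz2⟩ := cross₂ P x.1 x.2 (hconn q0 hm0 w hw) (ge_of_eq hw2) hR hm0 h0a h0b
    exact absurd (hT z hz hz1) (by omega)
  · -- row strictly left, column strictly below: use q2 and cross₃
    have h2a : x.1 < q2.1 := lt_of_le_of_ne h20 (fun h => absurd (hB q2 hm2 h.symm) (by omega))
    have h2b : x.2 < q2.2 := lt_of_le_of_ne h21 (fun h => absurd (hL q2 hm2 h.symm) (by omega))
    obtain ⟨z, hz, hz1, hz2⟩ := cross₃ P x.1 x.2 (hconn q2 hm2 w hw) (le_of_eq hw2) hL hm2 h2a h2b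
    exact absurd (hB z hz hz1) (by omega)
  · -- row strictly left, column strictly above: use q1 and cross₄
    have h1a : x.1 < q1.1 := lt_of_le_of_ne h10 (fun h => absurd (hT q1 hm1 h.symm) (by omega))
    have h1b : q1.2 < x.2 := lt_of_le_of_ne h11 (fun h => absurd (hL q1 hm1 h) (by omega))
    obtain ⟨z, hz, hz1, hz2⟩ := cross₄ P x.1 x.2 (hconn q1 hm1 w hw) (ge_of_eq hw2) hL hm1 h1a h1b
    exact absurd (hT z hz hz1) (by omega)

lemma exists_free (P : Set (ℤ × ℤ)) (hP : IsHvPolyomino P) (x : ℤ × ℤ) (hx : x ∉ P) :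
    ∃ i : Fin 4, Zq i x ∩ P = ∅ := by
  by_contra h
  push_neg at h
  exact hx (all_quadrants_imp_mem P hP x h)

lemma free_unique (S : Set (ℤ × ℤ)) (x q r : ℤ × ℤ) (hq : q ∈ S) (hr : r ∈ S)
    (hq2 : q.2 = x.2) (hr1 : r.1 = x.1) {i j : Fin 4}
    (hi : Zq i x ∩ S = ∅) (hj : Zq j x ∩ S = ∅) : i = j := by
  have Hiq : q ∉ Zq i x := fun h => Set.eq_empty_iff_forall_notMem.1 hi q ⟨h, hq⟩
  have Hir : r ∉ Zq i x := fun h => Set.eq_empty_iff_forall_notMem.1 hi r ⟨h, hr⟩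
  have Hjq : q ∉ Zq j x := fun h => Set.eq_empty_iff_forall_notMem.1 hj q ⟨h, hq⟩
  have Hjr : r ∉ Zq j x := fun h => Set.eq_empty_iff_forall_notMem.1 hj r ⟨h, hr⟩
  fin_cases i <;> fin_cases j <;>
    simp only [Zq, Set.mem_setOf_eq, not_and_or, not_le] at Hiq Hir Hjq Hjr <;>
    first
      | rfl
      | omega

lemma proj_diff (f : ℤ × ℤ → ℤ) (P₁ P₂ : Set (ℤ × ℤ)) (h1 : P₁.Finite) (h2 : P₂.Finite) (c : ℤ)
    (h : {p ∈ P₁ | f p = c}.ncard = {p ∈ P₂ | f p = c}.ncard) :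
    {p ∈ P₁ \ P₂ | f p = c}.ncard = {p ∈ P₂ \ P₁ | f p = c}.ncard := by
  have fA : {p ∈ P₁ \ P₂ | f p = c}.Finite := h1.subset fun p hp => hp.1.1
  have fB : {p ∈ P₁ ∩ P₂ | f p = c}.Finite := h1.subset fun p hp => hp.1.1
  have fC : {p ∈ P₂ \ P₁ | f p = c}.Finite := h2.subset fun p hp => hp.1.1
  have e1 : {p ∈ P₁ | f p = c} = {p ∈ P₁ \ P₂ | f p = c} ∪ {p ∈ P₁ ∩ P₂ | f p = c} := by
    ext p; simp only [Set.mem_setOf_eq, Set.mem_union, Set.mem_diff, Set.mem_inter_iff]; tauto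
  have e2 : {p ∈ P₂ | f p = c} = {p ∈ P₂ \ P₁ | f p = c} ∪ {p ∈ P₁ ∩ P₂ | f p = c} := by
    ext p; simp only [Set.mem_setOf_eq, Set.mem_union, Set.mem_diff, Set.mem_inter_iff]; tauto
  have d1 : Disjoint {p ∈ P₁ \ P₂ | f p = c} {p ∈ P₁ ∩ P₂ | f p = c} := by
    rw [Set.disjoint_left]; rintro p ⟨⟨-, hp2⟩, -⟩ ⟨⟨-, hp2'⟩, -⟩; exact hp2 hp2'
  have d2 : Disjoint {p ∈ P₂ \ P₁ | f p = c} {p ∈ P₁ ∩ P₂ | f p = c} := by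
    rw [Set.disjoint_left]; rintro p ⟨⟨-, hp1⟩, -⟩ ⟨⟨hp1', -⟩, -⟩; exact hp1 hp1'
  rw [e1, e2, Set.ncard_union_eq d1 fA fB, Set.ncard_union_eq d2 fC fB] at h
  omega

lemma ncard_eq_of_hProj (S0 S1 : Set (ℤ × ℤ)) (h0 : S0.Finite) (h1 : S1.Finite)
    (h : ∀ c, hProj S0 c = hProj S1 c) : S0.ncard = S1.ncard := by
  classical
  set T : Finset ℤ := (h0.toFinset ∪ h1.toFinset).image Prod.snd with hT
  have key : ∀ (S : Set (ℤ × ℤ)) (hS : S.Finite), (∀ p ∈ S, p.2 ∈ T) →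
      S.ncard = ∑ c ∈ T, hProj S c := by
    intro S hS hsub
    rw [Set.ncard_eq_toFinset_card S hS,
      Finset.card_eq_sum_card_fiberwise (f := fun p => p.2) (t := T)
        (fun p hp => hsub p (hS.mem_toFinset.1 hp))]
    refine Finset.sum_congr rfl fun c _ => ?_
    have e : {p ∈ S | p.2 = c} = ↑(hS.toFinset.filter fun p => p.2 = c) := by
      ext p; simp [Set.Finite.mem_toFinset]
    rw [hProj, e, Set.ncard_coe_finset]
  have m0 : ∀ p ∈ S0, p.2 ∈ T := fun p hp =>
    Finset.mem_image.2 ⟨p, Finset.mem_union_left _ (h0.mem_toFinset.2 hp), rfl⟩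
  have m1 : ∀ p ∈ S1, p.2 ∈ T := fun p hp =>
    Finset.mem_image.2 ⟨p, Finset.mem_union_right _ (h1.mem_toFinset.2 hp), rfl⟩
  rw [key S0 h0 m0, key S1 h1 m1]
  exact Finset.sum_congr rfl fun c _ => h c

/-- if `P₁, P₂` are hv-convex polyominoes with the same horizontal and
vertical projections and `P₁ ≠ P₂`, then every point of `S⁰ = P₁ \ P₂` has exactly one
free region with respect to `S¹ = P₂ \ P₁` and conversely; in particular `(S⁰, S¹)` is an
hv-convex switching. -/
theorem stmt5 (P₁ P₂ : Set (ℤ × ℤ)) (h₁ : IsHvPolyomino P₁) (h₂ : IsHvPolyomino P₂)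
    (hH : ∀ c : ℤ, hProj P₁ c = hProj P₂ c) (hV : ∀ c : ℤ, vProj P₁ c = vProj P₂ c)
    (hne : P₁ ≠ P₂) :
    (∀ x ∈ P₁ \ P₂, ∃! i : Fin 4, Zq i x ∩ (P₂ \ P₁) = ∅) ∧
    (∀ x ∈ P₂ \ P₁, ∃! i : Fin 4, Zq i x ∩ (P₁ \ P₂) = ∅) ∧
    IsHvConvexSwitching (P₁ \ P₂) (P₂ \ P₁) := by
  have hf1 : P₁.Finite := h₁.1
  have hf2 : P₂.Finite := h₂.1
  have hS0f : (P₁ \ P₂).Finite := hf1.subset Set.diff_subset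
  have hS1f : (P₂ \ P₁).Finite := hf2.subset Set.diff_subset
  have hHp : ∀ c, hProj (P₁ \ P₂) c = hProj (P₂ \ P₁) c := fun c =>
    proj_diff (fun p => p.2) P₁ P₂ hf1 hf2 c (hH c)
  have hVp : ∀ c, vProj (P₁ \ P₂) c = vProj (P₂ \ P₁) c := fun c =>
    proj_diff (fun p => p.1) P₁ P₂ hf1 hf2 c (hV c)
  -- companions in the other diff on the same row / column
  have companions : ∀ (A B : Set (ℤ × ℤ)), A.Finite → B.Finite →
      (∀ c, hProj A c = hProj B c) → ∀ x ∈ A, ∃ q ∈ B, q.2 = x.2 := by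
    intro A B hA hB hproj x hx
    have h1 : 0 < hProj A x.2 :=
      (Set.ncard_pos (hA.subset fun p hp => hp.1)).2 ⟨x, hx, rfl⟩
    rw [hproj x.2] at h1
    obtain ⟨q, hq⟩ := (Set.ncard_pos (hB.subset fun p hp => hp.1)).1 h1
    exact ⟨q, hq.1, hq.2⟩
  have companionsV : ∀ (A B : Set (ℤ × ℤ)), A.Finite → B.Finite →
      (∀ c, vProj A c = vProj B c) → ∀ x ∈ A, ∃ r ∈ B, r.1 = x.1 := by
    intro A B hA hB hproj x hx
    have h1 : 0 < vProj A x.1 :=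
      (Set.ncard_pos (hA.subset fun p hp => hp.1)).2 ⟨x, hx, rfl⟩
    rw [hproj x.1] at h1
    obtain ⟨r, hr⟩ := (Set.ncard_pos (hB.subset fun p hp => hp.1)).1 h1
    exact ⟨r, hr.1, hr.2⟩
  have main0 : ∀ x ∈ P₁ \ P₂, ∃! i : Fin 4, Zq i x ∩ (P₂ \ P₁) = ∅ := by
    intro x hx
    obtain ⟨i, hi⟩ := exists_free P₂ h₂ x hx.2
    have hi' : Zq i x ∩ (P₂ \ P₁) = ∅ :=
      Set.eq_empty_iff_forall_notMem.2 fun p hp =>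
        Set.eq_empty_iff_forall_notMem.1 hi p ⟨hp.1, hp.2.1⟩
    obtain ⟨q, hq, hq2⟩ := companions _ _ hS0f hS1f hHp x hx
    obtain ⟨r, hr, hr1⟩ := companionsV _ _ hS0f hS1f hVp x hx
    exact ⟨i, hi', fun j hj => free_unique _ x q r hq hr hq2 hr1 hj hi'⟩
  have main1 : ∀ x ∈ P₂ \ P₁, ∃! i : Fin 4, Zq i x ∩ (P₁ \ P₂) = ∅ := by
    intro x hx
    obtain ⟨i, hi⟩ := exists_free P₁ h₁ x hx.2
    have hi' : Zq i x ∩ (P₁ \ P₂) = ∅ :=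
      Set.eq_empty_iff_forall_notMem.2 fun p hp =>
        Set.eq_empty_iff_forall_notMem.1 hi p ⟨hp.1, hp.2.1⟩
    obtain ⟨q, hq, hq2⟩ := companions _ _ hS1f hS0f (fun c => (hHp c).symm) x hx
    obtain ⟨r, hr, hr1⟩ := companionsV _ _ hS1f hS0f (fun c => (hVp c).symm) x hx
    exact ⟨i, hi', fun j hj => free_unique _ x q r hq hr hq2 hr1 hj hi'⟩
  refine ⟨main0, main1, ⟨hS0f, hS1f, ?_, ?_, hHp, hVp⟩, ?_, ?_⟩
  · exact Set.disjoint_left.2 fun p hp hq => hp.2 hq.1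
  · exact ncard_eq_of_hProj _ _ hS0f hS1f hHp
  · exact fun x hx => (main0 x hx).exists
  · exact fun x hx => (main1 x hx).exists
end

section
/- Let w : ZMod m → ℤ² be a closed squared spiral on m vertices. Then its associated pair (S⁰, S¹), with S⁰ = {w(i) : i even} and S¹ = {w(i) : i odd}, is an hv-switching: S⁰ and S¹ are disjoint, have cardinality m/2 each, and have the same horizontal and vertical projections. -/
/-- A closed squared spiral on `m` vertices: an injective closed lattice path whose
segments are alternately horizontal (from even-indexed vertices) and vertical
(from odd-indexed vertices). -/
structure IsClosedSquaredSpiral {m : ℕ} (w : ZMod m → ℤ × ℤ) : Prop where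
  even_m : Even m
  four_le : 4 ≤ m
  inj : Function.Injective w
  horiz : ∀ i : ZMod m, Even i.val → (w (i + 1)).2 = (w i).2 ∧ (w (i + 1)).1 ≠ (w i).1
  vert : ∀ i : ZMod m, ¬ Even i.val → (w (i + 1)).1 = (w i).1 ∧ (w (i + 1)).2 ≠ (w i).2

/-- The turn `d(i) = u₁v₂ − u₂v₁` at vertex `i`, where `u = w i − w (i−1)` and
`v = w (i+1) − w i`. -/
def turn {m : ℕ} (w : ZMod m → ℤ × ℤ) (i : ZMod m) : ℤ :=
  ((w i).1 - (w (i - 1)).1) * ((w (i + 1)).2 - (w i).2)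
    - ((w i).2 - (w (i - 1)).2) * ((w (i + 1)).1 - (w i).1)

/-- A window: a squared spiral all of whose turns have the same sign. -/
def IsWindow {m : ℕ} (w : ZMod m → ℤ × ℤ) : Prop :=
  (∀ i : ZMod m, 0 < turn w i) ∨ (∀ i : ZMod m, turn w i < 0)

/-- The even-indexed vertices of a spiral. -/
def spiralEven {m : ℕ} (w : ZMod m → ℤ × ℤ) : Set (ℤ × ℤ) := w '' {i | Even i.val}

/-- The odd-indexed vertices of a spiral. -/
def spiralOdd {m : ℕ} (w : ZMod m → ℤ × ℤ) : Set (ℤ × ℤ) := w '' {i | ¬ Even i.val}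


lemma parity_mod (m n : ℕ) (hm : Even m) : Even (n % m) ↔ Even n := by
  conv_rhs => rw [← Nat.div_add_mod n m]
  rw [Nat.even_add]
  simp [Nat.even_mul, hm]

lemma parity_succ {m : ℕ} (hm : Even m) (h4 : 4 ≤ m) (i : ZMod m) :
    Even ((i + 1).val) ↔ ¬ Even i.val := by
  haveI : NeZero m := ⟨by omega⟩
  have h1 : (1 : ZMod m).val = 1 := ZMod.val_one'' (by omega)
  rw [ZMod.val_add, h1, parity_mod m _ hm, Nat.even_add_one]

/-- the pair of parity classes of vertices of a closed squared spiral on `m`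
vertices is an hv-switching, with each class of cardinality `m / 2`. -/
theorem stmt6 (m : ℕ) (w : ZMod m → ℤ × ℤ) (hw : IsClosedSquaredSpiral w) :
    IsHvSwitching (spiralEven w) (spiralOdd w) ∧
      (spiralEven w).ncard = m / 2 ∧ (spiralOdd w).ncard = m / 2 := by
  have h4 := hw.four_le
  have hm := hw.even_m
  haveI : NeZero m := ⟨by omega⟩
  have hps : ∀ i : ZMod m, Even ((i + 1).val) ↔ ¬ Even i.val := parity_succ hm h4
  have hpp : ∀ j : ZMod m, ¬ Even j.val → Even (j - 1).val := by
    intro j hj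
    by_contra h'
    have h := hps (j - 1)
    rw [sub_add_cancel] at h
    exact hj (by tauto)
  have hpp' : ∀ j : ZMod m, Even j.val → ¬ Even (j - 1).val := by
    intro j hj
    have h := hps (j - 1)
    rw [sub_add_cancel] at h
    exact h.mp hj
  have hadd_inj : Function.Injective (fun i : ZMod m => i + 1) :=
    fun a b h => by simpa using h
  -- set image computation for projections
  have himg : ∀ (P : ZMod m → Prop) (Q : ℤ × ℤ → Prop),
      {p ∈ w '' {i | P i} | Q p} = w '' {i | P i ∧ Q (w i)} := by
    intro P Q
    ext p
    constructor
    · rintro ⟨⟨i, hi, rfl⟩, hq⟩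
      exact ⟨i, ⟨hi, hq⟩, rfl⟩
    · rintro ⟨i, ⟨hi, hq⟩, rfl⟩
      exact ⟨⟨i, hi, rfl⟩, hq⟩
  -- ncard of odd index set equals even index set
  have hOE : {i : ZMod m | ¬ Even i.val} = (fun i : ZMod m => i + 1) '' {i | Even i.val} := by
    ext j
    constructor
    · intro hj
      exact ⟨j - 1, hpp j hj, sub_add_cancel j 1⟩
    · rintro ⟨i, hi, rfl⟩
      exact fun h => (hps i).mp h hi
  have hcardE : {i : ZMod m | Even i.val}.ncard = m / 2 := by
    have h1 : {i : ZMod m | ¬ Even i.val}.ncard = {i : ZMod m | Even i.val}.ncard := by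
      rw [hOE, Set.ncard_image_of_injective _ hadd_inj]
    have h3 : ({i : ZMod m | Even i.val}ᶜ : Set (ZMod m)) = {i | ¬ Even i.val} := by
      ext i; simp
    have h2 : {i : ZMod m | Even i.val}.ncard + {i : ZMod m | Even i.val}ᶜ.ncard = m := by
      rw [Set.ncard_add_ncard_compl, Nat.card_eq_fintype_card, ZMod.card]
    rw [h3, h1] at h2
    omega
  have hcE : (spiralEven w).ncard = m / 2 := by
    rw [spiralEven, Set.ncard_image_of_injective _ hw.inj, hcardE]
  have hcO : (spiralOdd w).ncard = m / 2 := by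
    rw [spiralOdd, Set.ncard_image_of_injective _ hw.inj, hOE,
      Set.ncard_image_of_injective _ hadd_inj, hcardE]
  have keyH : ∀ c : ℤ, (fun i : ZMod m => i + 1) '' {i | Even i.val ∧ (w i).2 = c}
      = {i | ¬ Even i.val ∧ (w i).2 = c} := by
    intro c
    ext j
    constructor
    · rintro ⟨i, ⟨hi, hc⟩, rfl⟩
      exact ⟨fun h => (hps i).mp h hi, by rw [(hw.horiz i hi).1, hc]⟩
    · rintro ⟨hj, hc⟩
      refine ⟨j - 1, ⟨hpp j hj, ?_⟩, sub_add_cancel j 1⟩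
      have h := (hw.horiz (j - 1) (hpp j hj)).1
      rw [sub_add_cancel] at h
      rw [← h]; exact hc
  have keyV : ∀ c : ℤ, (fun i : ZMod m => i + 1) '' {i | ¬ Even i.val ∧ (w i).1 = c}
      = {i | Even i.val ∧ (w i).1 = c} := by
    intro c
    ext j
    constructor
    · rintro ⟨i, ⟨hi, hc⟩, rfl⟩
      exact ⟨(hps i).mpr hi, by rw [(hw.vert i hi).1, hc]⟩
    · rintro ⟨hj, hc⟩
      refine ⟨j - 1, ⟨hpp' j hj, ?_⟩, sub_add_cancel j 1⟩
      have h := (hw.vert (j - 1) (hpp' j hj)).1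
      rw [sub_add_cancel] at h
      rw [← h]; exact hc
  refine ⟨⟨Set.Finite.image _ (Set.toFinite _), Set.Finite.image _ (Set.toFinite _), ?_, ?_, ?_, ?_⟩, hcE, hcO⟩
  · rw [Set.disjoint_left]
    rintro p ⟨i, hi, rfl⟩ ⟨j, hj, hij⟩
    exact hj (hw.inj hij ▸ hi)
  · rw [hcE, hcO]
  · intro c
    rw [hProj, hProj, spiralEven, spiralOdd, himg, himg,
      Set.ncard_image_of_injective _ hw.inj, Set.ncard_image_of_injective _ hw.inj,
      ← keyH c, Set.ncard_image_of_injective _ hadd_inj]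
  · intro c
    rw [vProj, vProj, spiralEven, spiralOdd, himg, himg,
      Set.ncard_image_of_injective _ hw.inj, Set.ncard_image_of_injective _ hw.inj,
      ← keyV c, Set.ncard_image_of_injective _ hadd_inj]
end

section
/- Let w : ZMod m → ℤ² be a closed squared spiral on m vertices that is a window (all turns have the same sign) and whose associated pair (S⁰, S¹) is an hv-convex switching. Then m is divisible by 4. -/
/-!
Record the direction of each edge of the spiral as a quarter turn in `ZMod 4`. Since edges
alternate between horizontal and vertical, consecutive directions differ by `±1`, and the
sign is exactly the sign of the turn between them. In a window every turn has the same sign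
`ε`, so walking once around the closed path adds `m • ε` to the direction, which must
therefore vanish in `ZMod 4`; as `ε` is a unit, `4 ∣ m`.
-/

theorem ZMod.even_val_add_one_iff {m : ℕ} [NeZero m] (hm : Even m) (i : ZMod m) :
    Even (i + 1).val ↔ ¬ Even i.val := by
  have h2 : 2 ∣ m := even_iff_two_dvd.mp hm
  simp only [← ZMod.natCast_eq_zero_iff_even, ZMod.natCast_val, ← ZMod.castHom_apply (h := h2),
    map_add, map_one]
  generalize ZMod.castHom h2 (ZMod 2) i = x
  revert x
  decide

theorem ZMod.dvd_of_apply_add_one_eq_add {m n : ℕ} (f : ZMod m → ZMod n) {ε : ZMod n}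
    (hε : IsUnit ε) (hf : ∀ i, f (i + 1) = f i + ε) : n ∣ m := by
  have hiter : ∀ k : ℕ, f k = f 0 + k * ε := by
    intro k
    induction k with
    | zero => simp
    | succ k ih => rw [Nat.cast_succ, hf, ih, Nat.cast_succ]; ring
  have h := hiter m
  rw [ZMod.natCast_self, left_eq_add, hε.mul_left_eq_zero] at h
  exact (ZMod.natCast_eq_zero_iff m n).mp h

def horizDir (x : ℤ) : ZMod 4 := if 0 < x then 0 else 2

theorem horizDir_add_one {a b : ℤ} (ha : a ≠ 0) (hb : b ≠ 0) :
    horizDir b + 1 = horizDir a + (a * b).sign := by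
  rcases ha.lt_or_gt with ha | ha <;> rcases hb.lt_or_gt with hb | hb <;>
    simp only [horizDir, Int.sign_mul, ha, hb, ha.not_gt, hb.not_gt, Int.sign_eq_neg_one_of_neg,
      Int.sign_eq_one_of_pos, if_true, if_false] <;> decide

theorem horizDir_eq_add_one {a b : ℤ} (ha : a ≠ 0) (hb : b ≠ 0) :
    horizDir b = horizDir a + 1 + (-(a * b)).sign := by
  rcases ha.lt_or_gt with ha | ha <;> rcases hb.lt_or_gt with hb | hb <;>
    simp only [horizDir, Int.sign_neg, Int.sign_mul, ha, hb, ha.not_gt, hb.not_gt,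
      Int.sign_eq_neg_one_of_neg, Int.sign_eq_one_of_pos, if_true, if_false] <;> decide

/-- Direction of the edge from `w i` to `w (i + 1)`, counted in quarter turns from east:
`0, 1, 2, 3` for east, north, west, south. -/
def edgeDir {m : ℕ} (w : ZMod m → ℤ × ℤ) (i : ZMod m) : ZMod 4 :=
  if Even i.val then horizDir ((w (i + 1)).1 - (w i).1)
  else horizDir ((w (i + 1)).2 - (w i).2) + 1

theorem IsClosedSquaredSpiral.edgeDir_add_one {m : ℕ} {w : ZMod m → ℤ × ℤ}
    (hw : IsClosedSquaredSpiral w) (i : ZMod m) :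
    edgeDir w (i + 1) = edgeDir w i + (turn w (i + 1)).sign := by
  have : NeZero m := ⟨by have := hw.four_le; omega⟩
  have hpar := ZMod.even_val_add_one_iff hw.even_m i
  by_cases hi : Even i.val
  · have hi1 : ¬ Even (i + 1).val := by rw [hpar]; exact not_not.mpr hi
    obtain ⟨hy, hx⟩ := hw.horiz i hi
    obtain ⟨hx', hy'⟩ := hw.vert (i + 1) hi1
    have hturn : turn w (i + 1) =
        ((w (i + 1)).1 - (w i).1) * ((w (i + 1 + 1)).2 - (w (i + 1)).2) := by
      simp only [turn, add_sub_cancel_right, hy, hx']; ring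
    rw [edgeDir, edgeDir, if_pos hi, if_neg hi1, hturn]
    exact horizDir_add_one (sub_ne_zero.mpr hx) (sub_ne_zero.mpr hy')
  · have hi1 : Even (i + 1).val := hpar.mpr hi
    obtain ⟨hx, hy⟩ := hw.vert i hi
    obtain ⟨hy', hx'⟩ := hw.horiz (i + 1) hi1
    have hturn : turn w (i + 1) =
        -(((w (i + 1)).2 - (w i).2) * ((w (i + 1 + 1)).1 - (w (i + 1)).1)) := by
      simp only [turn, add_sub_cancel_right, hx, hy']; ring
    rw [edgeDir, edgeDir, if_neg hi, if_pos hi1, hturn]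
    exact horizDir_eq_add_one (sub_ne_zero.mpr hy) (sub_ne_zero.mpr hx')

theorem IsWindow.four_dvd {m : ℕ} {w : ZMod m → ℤ × ℤ} (hw : IsClosedSquaredSpiral w)
    (hwin : IsWindow w) : 4 ∣ m := by
  rcases hwin with hpos | hneg
  · refine ZMod.dvd_of_apply_add_one_eq_add (edgeDir w) isUnit_one fun i => ?_
    rw [hw.edgeDir_add_one, Int.sign_eq_one_of_pos (hpos _), Int.cast_one]
  · refine ZMod.dvd_of_apply_add_one_eq_add (edgeDir w) isUnit_one.neg fun i => ?_
    rw [hw.edgeDir_add_one, Int.sign_eq_neg_one_of_neg (hneg _), Int.cast_neg, Int.cast_one]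

theorem stmt8_general (m : ℕ) (w : ZMod m → ℤ × ℤ) (hw : IsClosedSquaredSpiral w)
    (hwin : IsWindow w) :
    4 ∣ m :=
  hwin.four_dvd hw

/-- if a window on `m` vertices is an hv-convex switching, then `4 ∣ m`. -/
theorem stmt8 (m : ℕ) (w : ZMod m → ℤ × ℤ) (hw : IsClosedSquaredSpiral w)
    (hwin : IsWindow w)
    (hconv : IsHvConvexSwitching (spiralEven w) (spiralOdd w)) :
    4 ∣ m :=
  stmt8_general m w hw hwin
end

section
/- Let w : ZMod m → ℤ² be a closed squared spiral on m vertices and suppose there exist an index a ∈ ZMod m and an integer n ≥ 1 with 2n + 2 ≤ m such that the turns d(a) and d(a + 2n + 1) have the same sign while the turns d(a+1), d(a+2), …, d(a+2n) all have the opposite sign (i.e., between the two equally-oriented vertices w(a) and w(a+2n+1) there are precisely 2n consecutive vertices of the opposite orientation). Then the associated pair (S⁰, S¹) is not an hv-convex switching. -/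
lemma sgnA {a b c : ℤ} (h1 : 0 < a * b) (h2 : a * c < 0) : b * c < 0 := by
  have ha : a ≠ 0 := fun h => by simp [h] at h1
  have ha2 : 0 < a * a := by rcases ha.lt_or_gt with h | h <;> nlinarith
  nlinarith [h1, h2, ha2]

lemma sgnB {a b c : ℤ} (h1 : 0 < a * b) (h2 : 0 < a * c) : 0 < b * c := by
  have ha : a ≠ 0 := fun h => by simp [h] at h1
  have ha2 : 0 < a * a := by rcases ha.lt_or_gt with h | h <;> nlinarith
  nlinarith [h1, h2, ha2]

lemma sgnC {a b c : ℤ} (h1 : 0 < a * b) (h2 : a * c ≤ 0) : b * c ≤ 0 := by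
  have ha : a ≠ 0 := fun h => by simp [h] at h1
  have ha2 : 0 < a * a := by rcases ha.lt_or_gt with h | h <;> nlinarith
  nlinarith [h1, h2, ha2]

lemma sgnE {a b c : ℤ} (h1 : a * b < 0) (h2 : a * c ≤ 0) : 0 ≤ b * c := by
  have ha : a ≠ 0 := fun h => by simp [h] at h1
  have ha2 : 0 < a * a := by rcases ha.lt_or_gt with h | h <;> nlinarith
  nlinarith [h1, h2, ha2]

lemma sgnF {a b c : ℤ} (h1 : a * b < 0) (h2 : a * c < 0) : 0 < b * c := by
  have ha : a ≠ 0 := fun h => by simp [h] at h1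
  have ha2 : 0 < a * a := by rcases ha.lt_or_gt with h | h <;> nlinarith
  nlinarith [h1, h2, ha2]

def ctn (P : ℕ → ℤ × ℤ) (k : ℕ) : ℤ :=
  ((P (k+1)).1 - (P k).1) * ((P (k+2)).2 - (P (k+1)).2)
    - ((P (k+1)).2 - (P k).2) * ((P (k+2)).1 - (P (k+1)).1)

def dX (P : ℕ → ℤ × ℤ) (k : ℕ) : ℤ := (P (k+1)).1 - (P k).1
def dY (P : ℕ → ℤ × ℤ) (k : ℕ) : ℤ := (P (k+1)).2 - (P k).2

lemma ctn_odd {P : ℕ → ℤ × ℤ} {k : ℕ} (h1 : (P (k+1)).2 = (P k).2)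
    (h2 : (P (k+2)).1 = (P (k+1)).1) : ctn P k = dX P k * dY P (k+1) := by
  unfold ctn dX dY; rw [h1, h2]; ring

lemma ctn_even {P : ℕ → ℤ × ℤ} {k : ℕ} (h1 : (P (k+1)).1 = (P k).1)
    (h2 : (P (k+2)).2 = (P (k+1)).2) : ctn P k = -(dY P k * dX P (k+1)) := by
  unfold ctn dX dY; rw [h1, h2]; ring

lemma alt_prod {f : ℕ → ℤ} {N : ℕ} (h0 : f 0 ≠ 0) (h : ∀ j, j < N → f j * f (j+1) < 0) :
    ∀ k, k ≤ N → (Even k → 0 < f 0 * f k) ∧ (¬ Even k → f 0 * f k < 0) := by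
  intro k
  induction k with
  | zero =>
    refine fun _ => ⟨fun _ => ?_, fun he => absurd Even.zero he⟩
    rcases h0.lt_or_gt with h' | h' <;> nlinarith
  | succ k ih =>
    intro hk
    have hkN : k < N := hk
    obtain ⟨ih1, ih2⟩ := ih hkN.le
    have hstep := h k hkN
    constructor
    · intro he
      have hko : ¬ Even k := by simpa [Nat.even_add_one] using he
      have := ih2 hko
      nlinarith [sq_nonneg (f k)]
    · intro ho
      have hke : Even k := by
        by_contra hko; exact ho (by simpa [Nat.even_add_one] using hko)
      have := ih1 hke
      nlinarith [sq_nonneg (f k)]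

lemma freeQuad {S T : Set (ℤ × ℤ)} (hv : ∀ x ∈ S, ∃ i : Fin 4, Zq i x ∩ T = ∅)
    {v : ℤ × ℤ} (hvS : v ∈ S) {α β : ℤ} (hα : α ≠ 0) (hβ : β ≠ 0)
    (h1 : (v.1 + α, v.2) ∈ T) (h2 : (v.1, v.2 + β) ∈ T) :
    ∀ z ∈ T, ¬(α * (z.1 - v.1) ≤ 0 ∧ β * (z.2 - v.2) ≤ 0) := by
  rintro z hz ⟨hx, hy⟩
  obtain ⟨i, hi⟩ := hv v hvS
  rw [Set.eq_empty_iff_forall_notMem] at hi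
  rcases hα.lt_or_gt with hαn | hαp <;> rcases hβ.lt_or_gt with hβn | hβp <;> fin_cases i <;>
    first
      | exact hi z ⟨⟨by nlinarith, by nlinarith⟩, hz⟩
      | exact hi _ ⟨⟨by simp; nlinarith, by simp⟩, h1⟩
      | exact hi _ ⟨⟨by simp, by simp; nlinarith⟩, h2⟩

set_option maxHeartbeats 1600000 in
lemma core (n : ℕ) (hn : 1 ≤ n) (P : ℕ → ℤ × ℤ) (S T : Set (ℤ × ℤ))
    (hS : ∀ k, k % 2 = 1 → P k ∈ S) (hT : ∀ k, k % 2 = 0 → P k ∈ T)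
    (hhor : ∀ k, k % 2 = 1 → (P (k+1)).2 = (P k).2 ∧ (P (k+1)).1 ≠ (P k).1)
    (hver : ∀ k, k % 2 = 0 → (P (k+1)).1 = (P k).1 ∧ (P (k+1)).2 ≠ (P k).2)
    (hsame : 0 < ctn P 0 * ctn P (2*n+1))
    (hopp : ∀ k, 1 ≤ k → k ≤ 2*n → ctn P k * ctn P 0 < 0)
    (hvS : ∀ x ∈ S, ∃ i : Fin 4, Zq i x ∩ T = ∅)
    (hvT : ∀ x ∈ T, ∃ i : Fin 4, Zq i x ∩ S = ∅) : False := by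
  have hdxne : ∀ k, k % 2 = 1 → dX P k ≠ 0 := fun k hk => sub_ne_zero.mpr (hhor k hk).2
  have hdyne : ∀ k, k % 2 = 0 → dY P k ≠ 0 := fun k hk => sub_ne_zero.mpr (hver k hk).2
  have hsq : ∀ x : ℤ, x ≠ 0 → 0 < x * x := fun x hx => by
    rcases hx.lt_or_gt with h | h <;> nlinarith
  have hto : ∀ k, k % 2 = 1 → ctn P k = dX P k * dY P (k+1) := fun k hk =>
    ctn_odd (hhor k hk).1 (hver (k+1) (by omega)).1
  have hte : ∀ k, k % 2 = 0 → ctn P k = -(dY P k * dX P (k+1)) := fun k hk =>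
    ctn_even (hver k hk).1 (hhor (k+1) (by omega)).1
  have hmid : ∀ j k, 1 ≤ j → j ≤ 2*n → 1 ≤ k → k ≤ 2*n → 0 < ctn P j * ctn P k := by
    intro j k h1 h2 h3 h4
    have hj := hopp j h1 h2
    have hk := hopp k h3 h4
    rw [mul_comm] at hj hk
    exact sgnF hj hk
  -- alternation of horizontal direction signs
  have hdxalt : ∀ j, j < n →
      (fun j => dX P (2*j+1)) j * (fun j => dX P (2*j+1)) (j+1) < 0 := by
    intro j hj
    simp only
    have key := hmid (2*j+1) (2*j+2) (by omega) (by omega) (by omega) (by omega)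
    rw [hto (2*j+1) (by omega), hte (2*j+2) (by omega)] at key
    have e1 : 2*j+1+1 = 2*j+2 := by omega
    have e2 : 2*(j+1)+1 = 2*j+2+1 := by omega
    rw [e1] at key
    rw [e2]
    nlinarith [key, hsq _ (hdyne (2*j+2) (by omega))]
  have hdxsgn := alt_prod (f := fun j => dX P (2*j+1)) (N := n)
    (by simpa using hdxne 1 (by omega)) hdxalt
  -- alternation of vertical direction signs
  have hdyalt : ∀ j, j < n - 1 →
      (fun j => dY P (2*j+2)) j * (fun j => dY P (2*j+2)) (j+1) < 0 := by
    intro j hj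
    simp only
    have key := hmid (2*j+2) (2*j+3) (by omega) (by omega) (by omega) (by omega)
    rw [hte (2*j+2) (by omega), hto (2*j+3) (by omega)] at key
    have e1 : 2*j+2+1 = 2*j+3 := by omega
    have e2 : 2*(j+1)+2 = 2*j+3+1 := by omega
    rw [e1] at key
    rw [e2]
    nlinarith [key, hsq _ (hdxne (2*j+3) (by omega))]
  have hdysgn := alt_prod (f := fun j => dY P (2*j+2)) (N := n-1)
    (by simpa using hdyne 2 (by omega)) hdyalt
  -- end relations
  have hend1 : 0 < dY P 0 * dY P 2 := by
    have h1 := hopp 1 le_rfl (by omega)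
    rw [hto 1 (by omega), hte 0 (by omega)] at h1
    norm_num at h1
    nlinarith [h1, hsq _ (hdxne 1 (by omega))]
  have hend2 : 0 < dY P (2*n) * dY P (2*n+2) := by
    have h1 := hopp (2*n) (by omega) le_rfl
    rw [mul_comm] at h1
    have h2 := sgnA hsame h1
    rw [hto (2*n+1) (by omega), hte (2*n) (by omega)] at h2
    have e1 : 2*n+1+1 = 2*n+2 := by omega
    rw [e1] at h2
    nlinarith [h2, hsq _ (hdxne (2*n+1) (by omega))]
  -- free quadrant statements
  have Fodd : ∀ j, ∀ z ∈ T,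
      ¬(dX P (2*j+1) * (z.1 - (P (2*j+1)).1) ≤ 0 ∧
        (-(dY P (2*j))) * (z.2 - (P (2*j+1)).2) ≤ 0) := by
    intro j
    refine freeQuad hvS (hS _ (by omega)) (hdxne _ (by omega))
      (neg_ne_zero.mpr (hdyne _ (by omega))) ?_ ?_
    · have e : ((P (2*j+1)).1 + dX P (2*j+1), (P (2*j+1)).2) = P (2*j+2) := by
        have h := (hhor (2*j+1) (by omega)).1
        have e1 : 2*j+1+1 = 2*j+2 := by omega
        rw [e1] at h
        refine Prod.ext ?_ h.symm
        show (P (2*j+1)).1 + dX P (2*j+1) = (P (2*j+2)).1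
        unfold dX
        rw [e1]
        ring
      rw [e]; exact hT _ (by omega)
    · have e : ((P (2*j+1)).1, (P (2*j+1)).2 + -(dY P (2*j))) = P (2*j) := by
        have h := (hver (2*j) (by omega)).1
        refine Prod.ext h ?_
        show (P (2*j+1)).2 + -(dY P (2*j)) = (P (2*j)).2
        unfold dY
        ring
      rw [e]; exact hT _ (by omega)
  have Feven : ∀ j, ∀ z ∈ S,
      ¬((-(dX P (2*j+1))) * (z.1 - (P (2*j+2)).1) ≤ 0 ∧
        dY P (2*j+2) * (z.2 - (P (2*j+2)).2) ≤ 0) := by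
    intro j
    refine freeQuad hvT (hT _ (by omega)) (neg_ne_zero.mpr (hdxne _ (by omega)))
      (hdyne _ (by omega)) ?_ ?_
    · have e : ((P (2*j+2)).1 + -(dX P (2*j+1)), (P (2*j+2)).2) = P (2*j+1) := by
        have h := (hhor (2*j+1) (by omega)).1
        have e1 : 2*j+1+1 = 2*j+2 := by omega
        rw [e1] at h
        refine Prod.ext ?_ h
        show (P (2*j+2)).1 + -(dX P (2*j+1)) = (P (2*j+1)).1
        unfold dX
        rw [e1]
        ring
      rw [e]; exact hS _ (by omega)
    · have e : ((P (2*j+2)).1, (P (2*j+2)).2 + dY P (2*j+2)) = P (2*j+3) := by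
        have h := (hver (2*j+2) (by omega)).1
        have e1 : 2*j+2+1 = 2*j+3 := by omega
        rw [e1] at h
        refine Prod.ext h.symm ?_
        show (P (2*j+2)).2 + dY P (2*j+2) = (P (2*j+3)).2
        unfold dY
        rw [e1]
        ring
      rw [e]; exact hS _ (by omega)
  have F1 := Fodd 0
  have F2 := Feven 0
  simp only [show (2*0+1:ℕ) = 1 by norm_num, show (2*0+2:ℕ) = 2 by norm_num,
    show (2*0:ℕ) = 0 by norm_num] at F1 F2
  have hY21 : (P 2).2 = (P 1).2 := by have := (hhor 1 (by omega)).1; norm_num at this; exact this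
  have hYs : (P (2*n+2)).2 = (P (2*n+1)).2 := by
    have := (hhor (2*n+1) (by omega)).1
    rw [show 2*n+1+1 = 2*n+2 by omega] at this; exact this
  have hX01 : (P 1).1 = (P 0).1 := by have := (hver 0 (by omega)).1; norm_num at this; exact this
  rcases Nat.even_or_odd n with hne | hno
  · -- case B : n even
    have hn2 : 2 ≤ n := by rcases hne with ⟨t, ht⟩; omega
    have hnev : n % 2 = 0 := Nat.even_iff.mp hne
    have SB1 : 0 < dX P 1 * dX P (2*n+1) := by
      have h := (hdxsgn n le_rfl).1 hne
      norm_num at h; exact h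
    have SB2 : dX P 1 * dX P (2*n-1) < 0 := by
      have h := (hdxsgn (n-1) (by omega)).2 (by rw [Nat.even_iff]; omega)
      norm_num at h
      rw [show 2*(n-1)+1 = 2*n-1 by omega] at h; exact h
    have SB3 : dY P 2 * dY P (2*n) < 0 := by
      have h := (hdysgn (n-1) le_rfl).2 (by rw [Nat.even_iff]; omega)
      norm_num at h
      rw [show 2*(n-1)+2 = 2*n by omega] at h; exact h
    have SB4 : 0 < dY P 2 * dY P (2*n-2) := by
      have h := (hdysgn (n-2) (by omega)).1 (Nat.even_iff.mpr (by omega))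
      norm_num at h
      rw [show 2*(n-2)+2 = 2*n-2 by omega] at h; exact h
    have SB5 : dY P 2 * dY P (2*n+2) < 0 := by
      have h1 : dY P (2*n) * dY P 2 < 0 := by nlinarith [SB3]
      have h := sgnA hend2 h1
      nlinarith [h]
    have FB := Fodd (n-1)
    rw [show 2*(n-1)+1 = 2*n-1 by omega, show 2*(n-1) = 2*n-2 by omega] at FB
    have hYv : (P (2*n)).2 = (P (2*n-1)).2 := by
      have := (hhor (2*n-1) (by omega)).1
      rw [show 2*n-1+1 = 2*n by omega] at this; exact this
    have hXs : (P (2*n+1)).1 = (P (2*n)).1 := (hver (2*n) (by omega)).1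
    have hY0 : (P 0).2 = (P 1).2 - dY P 0 := by
      have : dY P 0 = (P (0+1)).2 - (P 0).2 := rfl
      norm_num at this; omega
    have hY3 : (P 3).2 = (P 2).2 + dY P 2 := by
      have : dY P 2 = (P (2+1)).2 - (P 2).2 := rfl
      norm_num at this; omega
    have hX3 : (P 3).1 = (P 2).1 := by
      have := (hver 2 (by omega)).1; norm_num at this; exact this
    have hX2n3 : (P (2*n+3)).1 = (P (2*n+2)).1 := by
      have := (hver (2*n+2) (by omega)).1
      rw [show 2*n+2+1 = 2*n+3 by omega] at this; exact this
    have hY2n3 : (P (2*n+3)).2 = (P (2*n+2)).2 + dY P (2*n+2) := by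
      have : dY P (2*n+2) = (P (2*n+2+1)).2 - (P (2*n+2)).2 := rfl
      rw [show 2*n+2+1 = 2*n+3 by omega] at this; omega
    have stepB1 : 0 < dY P 2 * ((P (2*n-1)).2 - (P 1).2) := by
      by_contra hB
      push_neg at hB
      rcases le_total (dX P 1 * ((P (2*n-1)).1 - (P 2).1)) 0 with hA | hA
      · refine FB (P 2) (hT 2 (by omega)) ⟨?_, ?_⟩
        · have h := sgnE SB2 hA
          nlinarith [h]
        · have h := sgnC SB4 hB
          rw [hY21]
          nlinarith [h]
      · refine F2 (P (2*n-1)) (hS _ (by omega)) ⟨?_, ?_⟩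
        · nlinarith [hA]
        · rw [hY21]; exact hB
    have stepB2 : 0 < dX P 1 * ((P (2*n)).1 - (P 1).1) := by
      by_contra hC
      push_neg at hC
      refine F1 (P (2*n)) (hT _ (by omega)) ⟨hC, ?_⟩
      rw [hYv]
      have h1 : 0 < dY P 2 * dY P 0 := by nlinarith [hend1]
      have h := sgnB h1 stepB1
      nlinarith [h]
    have stepB3 : dY P 2 * ((P (2*n+1)).2 - (P 1).2) < 0 := by
      by_contra hD
      push_neg at hD
      refine Fodd n (P 0) (hT 0 (by omega)) ⟨?_, ?_⟩
      · rw [hXs, ← hX01]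
        exact sgnC SB1 (by nlinarith [stepB2])
      · rw [hY0]
        have hc : dY P 2 * ((P 1).2 - dY P 0 - (P (2*n+1)).2) < 0 := by
          nlinarith [hD, hend1]
        have h := sgnF SB3 hc
        nlinarith [h]
    have stepB4 : dX P 1 * ((P (2*n+2)).1 - (P 2).1) < 0 := by
      by_contra hE
      push_neg at hE
      refine F2 (P (2*n+3)) (hS _ (by omega)) ⟨?_, ?_⟩
      · rw [hX2n3]
        nlinarith [hE]
      · rw [hY2n3, hYs, hY21]
        nlinarith [stepB3, SB5]
    refine Feven n (P 3) (hS 3 (by omega)) ⟨?_, ?_⟩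
    · rw [hX3]
      have h := sgnA SB1 stepB4
      nlinarith [h]
    · rw [hY3, hY21, hYs]
      have h1 : 0 < dY P 2 * ((P 1).2 + dY P 2 - (P (2*n+1)).2) := by
        nlinarith [stepB3, hsq _ (hdyne 2 (by omega))]
      have h := sgnA h1 SB5
      nlinarith [h]
  · -- case A : n odd
    have hnodd : n % 2 = 1 := Nat.odd_iff.mp hno
    have SA1 : dX P 1 * dX P (2*n+1) < 0 := by
      have h := (hdxsgn n le_rfl).2 (Nat.not_even_iff_odd.mpr hno)
      norm_num at h; exact h
    have SA2 : 0 < dY P 2 * dY P (2*n) := by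
      have h := (hdysgn (n-1) le_rfl).1 (Nat.even_iff.mpr (by omega))
      norm_num at h
      rw [show 2*(n-1)+2 = 2*n by omega] at h; exact h
    have SA3 : 0 < dY P 2 * dY P (2*n+2) := by
      have h : 0 < dY P (2*n) * dY P 2 := by nlinarith [SA2]
      exact sgnB h hend2
    have step1 : 0 < dY P 2 * ((P (2*n+1)).2 - (P 1).2) := by
      by_contra hB
      push_neg at hB
      rcases le_total (dX P 1 * ((P (2*n+1)).1 - (P 2).1)) 0 with hA | hA
      · refine Fodd n (P 2) (hT 2 (by omega)) ⟨?_, ?_⟩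
        · have h := sgnE SA1 hA
          nlinarith [h]
        · have h := sgnC SA2 hB
          rw [hY21]
          nlinarith [h]
      · refine F2 (P (2*n+1)) (hS _ (by omega)) ⟨?_, ?_⟩
        · nlinarith [hA]
        · rw [hY21]; exact hB
    have step2 : 0 < dX P 1 * ((P (2*n+2)).1 - (P 1).1) := by
      by_contra hC
      push_neg at hC
      refine F1 (P (2*n+2)) (hT _ (by omega)) ⟨hC, ?_⟩
      rw [hYs]
      have h1 : 0 < dY P 2 * dY P 0 := by nlinarith [hend1]
      have h := sgnB h1 step1
      nlinarith [h]
    refine Feven n (P 1) (hS 1 (by omega)) ⟨?_, ?_⟩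
    · have h := sgnA step2 SA1
      nlinarith [h]
    · rw [hYs]
      have h := sgnB SA3 step1
      nlinarith [h]

lemma ctn_swap (Q : ℕ → ℤ × ℤ) (k : ℕ) :
    ctn (fun j => Prod.swap (Q j)) k = -(ctn Q k) := by
  simp only [ctn, Prod.fst_swap, Prod.snd_swap]
  ring

lemma zq_swap (i : Fin 4) (v p : ℤ × ℤ) :
    Prod.swap p ∈ Zq (![0,3,2,1] i) (Prod.swap v) ↔ p ∈ Zq i v := by
  fin_cases i <;> simp [Zq] <;> tauto

lemma freeswap {A B : Set (ℤ × ℤ)} (h : ∀ x ∈ A, ∃ i : Fin 4, Zq i x ∩ B = ∅) :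
    ∀ x ∈ Prod.swap '' A, ∃ i : Fin 4, Zq i x ∩ (Prod.swap '' B) = ∅ := by
  rintro x ⟨y, hy, rfl⟩
  obtain ⟨i, hi⟩ := h y hy
  refine ⟨![0,3,2,1] i, Set.eq_empty_iff_forall_notMem.mpr ?_⟩
  rintro p ⟨hp1, q, hq, rfl⟩
  exact Set.eq_empty_iff_forall_notMem.mp hi q ⟨(zq_swap i y q).mp hp1, hq⟩

set_option maxHeartbeats 800000 in
/-- if a closed squared spiral has two equally-oriented vertices `w a` and
`w (a + 2n + 1)` separated by precisely `2n > 0` consecutive vertices of the opposite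
orientation, then its associated pair is not an hv-convex switching. -/

theorem stmt10 (m : ℕ) (w : ZMod m → ℤ × ℤ) (hw : IsClosedSquaredSpiral w)
    (a : ZMod m) (n : ℕ) (hn : 1 ≤ n) (hm : 2 * n + 2 ≤ m)
    (hsame : 0 < turn w a * turn w (a + ((2 * n + 1 : ℕ) : ZMod m)))
    (hopp : ∀ k : ℕ, 1 ≤ k → k ≤ 2 * n → turn w (a + (k : ZMod m)) * turn w a < 0) :
    ¬ IsHvConvexSwitching (spiralEven w) (spiralOdd w) := by
  intro hcv
  obtain ⟨-, hc0, hc1⟩ := hcv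
  have hm4 : 4 ≤ m := hw.four_le
  haveI : NeZero m := ⟨by omega⟩
  have h2m : 2 ∣ m := hw.even_m.two_dvd
  have hme : m % 2 = 0 := Nat.even_iff.mp hw.even_m
  have hm1 : ((m - 1 : ℕ) : ZMod m) = -1 := by
    rw [Nat.cast_sub (by omega : 1 ≤ m), ZMod.natCast_self]; ring
  have hparity : ∀ k : ℕ, (a - 1 + (k : ZMod m)).val % 2 = (a.val + k + 1) % 2 := by
    intro k
    have e : a - 1 + (k : ZMod m) = a + ((m - 1 + k : ℕ) : ZMod m) := by
      rw [Nat.cast_add, hm1]; ring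
    rw [e, ZMod.val_add, ZMod.val_natCast]
    have e1 := Nat.mod_mod_of_dvd (a.val + (m - 1 + k) % m) h2m
    have e2 := Nat.mod_mod_of_dvd (m - 1 + k) h2m
    omega
  have hidx1 : ∀ k : ℕ, a - 1 + ((k + 1 : ℕ) : ZMod m) = a - 1 + (k : ZMod m) + 1 := by
    intro k; push_cast; ring
  have hctn0 : ∀ k : ℕ,
      ctn (fun j : ℕ => w (a - 1 + (j : ZMod m))) k = turn w (a + (k : ZMod m)) := by
    intro k
    unfold ctn turn
    have e2 : a + (k : ZMod m) + 1 = a - 1 + ((k + 2 : ℕ) : ZMod m) := by push_cast; ring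
    have e0 : a + (k : ZMod m) - 1 = a - 1 + ((k : ℕ) : ZMod m) := by ring
    have e1 : a + (k : ZMod m) = a - 1 + ((k + 1 : ℕ) : ZMod m) := by push_cast; ring
    rw [e2, e0, e1]
  rcases Nat.even_or_odd a.val with hae | hao
  · -- a even
    have hav : a.val % 2 = 0 := Nat.even_iff.mp hae
    refine core n hn (fun j : ℕ => w (a - 1 + (j : ZMod m))) (spiralEven w) (spiralOdd w)
      ?_ ?_ ?_ ?_ ?_ ?_ hc0 hc1
    · intro k hk
      exact ⟨a - 1 + (k : ZMod m), Nat.even_iff.mpr (by have := hparity k; omega), rfl⟩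
    · intro k hk
      refine ⟨a - 1 + (k : ZMod m), ?_, rfl⟩
      rw [Set.mem_setOf_eq, Nat.even_iff]
      have := hparity k; omega
    · intro k hk
      have h := hw.horiz (a - 1 + (k : ZMod m))
        (Nat.even_iff.mpr (by have := hparity k; omega))
      rwa [← hidx1 k] at h
    · intro k hk
      have h := hw.vert (a - 1 + (k : ZMod m))
        (by rw [Nat.even_iff]; have := hparity k; omega)
      rwa [← hidx1 k] at h
    · rw [hctn0 0, hctn0 (2*n+1)]
      simpa using hsame
    · intro k h1 h2
      rw [hctn0 k, hctn0 0]
      simpa using hopp k h1 h2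
  · -- a odd
    have hav : a.val % 2 = 1 := Nat.odd_iff.mp hao
    refine core n hn (fun j : ℕ => Prod.swap (w (a - 1 + (j : ZMod m))))
      (Prod.swap '' spiralOdd w) (Prod.swap '' spiralEven w)
      ?_ ?_ ?_ ?_ ?_ ?_ (freeswap hc1) (freeswap hc0)
    · intro k hk
      exact Set.mem_image_of_mem _
        ⟨a - 1 + (k : ZMod m),
          (by rw [Set.mem_setOf_eq, Nat.even_iff]; have := hparity k; omega), rfl⟩
    · intro k hk
      exact Set.mem_image_of_mem _
        ⟨a - 1 + (k : ZMod m), Nat.even_iff.mpr (by have := hparity k; omega), rfl⟩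
    · intro k hk
      have h := hw.vert (a - 1 + (k : ZMod m))
        (by rw [Nat.even_iff]; have := hparity k; omega)
      rw [← hidx1 k] at h
      simpa only [Prod.fst_swap, Prod.snd_swap] using h
    · intro k hk
      have h := hw.horiz (a - 1 + (k : ZMod m))
        (Nat.even_iff.mpr (by have := hparity k; omega))
      rw [← hidx1 k] at h
      simpa only [Prod.fst_swap, Prod.snd_swap] using h
    · rw [ctn_swap (fun j : ℕ => w (a - 1 + (j : ZMod m))) 0,
        ctn_swap (fun j : ℕ => w (a - 1 + (j : ZMod m))) (2*n+1),
        neg_mul_neg, hctn0 0, hctn0 (2*n+1)]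
      simpa using hsame
    · intro k h1 h2
      rw [ctn_swap (fun j : ℕ => w (a - 1 + (j : ZMod m))) k,
        ctn_swap (fun j : ℕ => w (a - 1 + (j : ZMod m))) 0,
        neg_mul_neg, hctn0 k, hctn0 0]
      simpa using hopp k h1 h2
end

section
/- Let w : ZMod m → ℤ² be a closed squared spiral on m vertices that is a curl (not all turns have the same sign) and whose associated pair (S⁰, S¹) is an hv-convex switching. Then every maximal run of consecutive equally-oriented vertices has odd length: whenever a ∈ ZMod m and 1 ≤ L < m are such that d(a), d(a+1), …, d(a+L−1) all have the same sign and both d(a−1) and d(a+L) have the opposite sign, L is odd. -/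
open Function

def crX (x y : ℤ → ℤ) (p : ℤ) : ℤ :=
  (x p - x (p-1)) * (y (p+1) - y p) - (y p - y (p-1)) * (x (p+1) - x p)

structure Cfg (L : ℤ) (s : ℤ) (x y : ℤ → ℤ) : Prop where
  axis : ∀ p : ℤ, x (p+1) = x p ∨ y (p+1) = y p
  pos : ∀ p : ℤ, 1 ≤ p → p ≤ L → 0 < s * crX x y p
  neg0 : s * crX x y 0 < 0
  negL : s * crX x y (L+1) < 0
  K : ∀ p q : ℤ, Odd (p - q) →
      ¬(0 ≤ (2 * x p - x (p-1) - x (p+1)) * (x q - x p) ∧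
        0 ≤ (2 * y p - y (p-1) - y (p+1)) * (y q - y p))

lemma dirLemma {L : ℤ} {x y : ℤ → ℤ} (C : Cfg L 1 x y) (hH : y 1 = y 0) (hx0 : x 0 < x 1) :
    ∀ k : ℤ, 0 ≤ k → k ≤ L →
      ((k % 4 = 0 → y (k+1) = y k ∧ x k < x (k+1)) ∧
       (k % 4 = 1 → x (k+1) = x k ∧ y k < y (k+1)) ∧
       (k % 4 = 2 → y (k+1) = y k ∧ x (k+1) < x k) ∧
       (k % 4 = 3 → x (k+1) = x k ∧ y (k+1) < y k)) := by
  have main : ∀ k : ℤ, 0 ≤ k → (k ≤ L → 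
      ((k % 4 = 0 → y (k+1) = y k ∧ x k < x (k+1)) ∧
       (k % 4 = 1 → x (k+1) = x k ∧ y k < y (k+1)) ∧
       (k % 4 = 2 → y (k+1) = y k ∧ x (k+1) < x k) ∧
       (k % 4 = 3 → x (k+1) = x k ∧ y (k+1) < y k))) := by
    refine Int.le_induction ?_ ?_
    · intro _
      refine ⟨fun _ => ⟨by norm_num [hH], by norm_num [hx0]⟩, ?_, ?_, ?_⟩ <;>
        exact fun h => absurd h (by norm_num)
    · intro k hk ih hkL
      simp only [show k+1+1 = k+2 from by ring]
      have hD := ih (by omega)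
      have hcr := C.pos (k+1) (by omega) hkL
      unfold crX at hcr
      rw [show k+1-1 = k from by ring, show k+1+1 = k+2 from by ring, one_mul] at hcr
      have hax := C.axis (k+1)
      rw [show k+1+1 = k+2 from by ring] at hax
      have h4 : k % 4 = 0 ∨ k % 4 = 1 ∨ k % 4 = 2 ∨ k % 4 = 3 := by omega
      rcases h4 with h | h | h | h
      · obtain ⟨hy, hx⟩ := hD.1 h
        rw [hy] at hcr
        have hyy : y k < y (k+2) := by nlinarith
        have hxx : x (k+2) = x (k+1) := by
          rcases hax with ha | ha
          · exact ha
          · rw [ha, hy] at hyy; exact absurd hyy (lt_irrefl _)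
        exact ⟨fun hm => absurd hm (by omega), fun _ => ⟨hxx, by rw [hy]; exact hyy⟩,
          fun hm => absurd hm (by omega), fun hm => absurd hm (by omega)⟩
      · obtain ⟨hx, hy⟩ := hD.2.1 h
        rw [hx] at hcr
        have hxx : x (k+2) < x (k+1) := by nlinarith
        have hyy : y (k+2) = y (k+1) := by
          rcases hax with ha | ha
          · rw [ha, hx] at hxx; exact absurd hxx (lt_irrefl _)
          · exact ha
        exact ⟨fun hm => absurd hm (by omega), fun hm => absurd hm (by omega),
          fun _ => ⟨hyy, hxx⟩, fun hm => absurd hm (by omega)⟩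
      · obtain ⟨hy, hx⟩ := hD.2.2.1 h
        rw [hy] at hcr
        have hyy : y (k+2) < y k := by nlinarith
        have hxx : x (k+2) = x (k+1) := by
          rcases hax with ha | ha
          · exact ha
          · rw [ha, hy] at hyy; exact absurd hyy (lt_irrefl _)
        exact ⟨fun hm => absurd hm (by omega), fun hm => absurd hm (by omega),
          fun hm => absurd hm (by omega), fun _ => ⟨hxx, by rw [hy]; exact hyy⟩⟩
      · obtain ⟨hx, hy⟩ := hD.2.2.2 h
        rw [hx] at hcr
        have hxx : x (k+1) < x (k+2) := by nlinarith
        have hyy : y (k+2) = y (k+1) := by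
          rcases hax with ha | ha
          · rw [ha, hx] at hxx; exact absurd hxx (lt_irrefl _)
          · exact ha
        exact ⟨fun _ => ⟨hyy, hxx⟩, fun hm => absurd hm (by omega),
          fun hm => absurd hm (by omega), fun hm => absurd hm (by omega)⟩
  exact fun k hk0 hkL => main k hk0 hkL

lemma mul_nonneg_np {a b : ℤ} (ha : a ≤ 0) (hb : b ≤ 0) : 0 ≤ a * b := by
  have := mul_nonneg (neg_nonneg.mpr ha) (neg_nonneg.mpr hb)
  nlinarith

lemma pos_of_mul_neg {a b : ℤ} (h : a * b < 0) (ha : a < 0) : 0 < b := by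
  by_contra hb
  push_neg at hb
  exact absurd (mul_nonneg_np ha.le hb) (not_le.mpr h)

lemma neg_of_mul_neg {a b : ℤ} (h : a * b < 0) (ha : 0 < a) : b < 0 := by
  by_contra hb
  push_neg at hb
  exact absurd (mul_nonneg ha.le hb) (not_le.mpr h)

lemma core_norm {L : ℤ} {x y : ℤ → ℤ} (hL2 : 2 ≤ L) (hLmod : L % 2 = 0)
    (C : Cfg L 1 x y) (hH : y 1 = y 0) (hx0 : x 0 < x 1) : False := by
  have dir := dirLemma C hH hx0
  have hcr0 := C.neg0
  unfold crX at hcr0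
  norm_num at hcr0
  rw [hH] at hcr0
  have hbm2 : y (-1) < y 0 := by nlinarith
  have hbm1 : x (-1) = x 0 := by
    have hax := C.axis (-1)
    norm_num at hax
    rcases hax with ha | ha
    · exact ha.symm
    · exact absurd ha.symm (by intro hh; rw [hh] at hbm2; exact lt_irrefl _ hbm2)
  have d1 := (dir 1 (by omega) (by omega)).2.1 (by norm_num)
  rw [show (1:ℤ)+1 = 2 from by norm_num] at d1
  have h4 : L % 4 = 0 ∨ L % 4 = 2 := by omega
  rcases h4 with h4 | h4
  · -- L ≡ 0 (mod 4), L ≥ 4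
    have hL4 : 4 ≤ L := by omega
    have d2 := (dir 2 (by omega) (by omega)).2.2.1 (by norm_num)
    rw [show (2:ℤ)+1 = 3 from by norm_num] at d2
    have d3 := (dir 3 (by omega) (by omega)).2.2.2 (by norm_num)
    rw [show (3:ℤ)+1 = 4 from by norm_num] at d3
    have dLm3 := (dir (L-3) (by omega) (by omega)).2.1 (by omega)
    rw [show L-3+1 = L-2 from by ring] at dLm3
    have dLm2 := (dir (L-2) (by omega) (by omega)).2.2.1 (by omega)
    rw [show L-2+1 = L-1 from by ring] at dLm2
    have dLm1 := (dir (L-1) (by omega) (by omega)).2.2.2 (by omega)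
    rw [show L-1+1 = L from by ring] at dLm1
    have dL := (dir L (by omega) le_rfl).1 h4
    have hcrL := C.negL
    unfold crX at hcrL
    rw [show L+1-1 = L from by ring, show L+1+1 = L+2 from by ring, one_mul, dL.1] at hcrL
    have hbp2 : y (L+2) < y (L+1) := by nlinarith [dL.2]
    have hbp1 : x (L+2) = x (L+1) := by
      have hax := C.axis (L+1)
      rw [show L+1+1 = L+2 from by ring] at hax
      rcases hax with ha | ha
      · exact ha
      · rw [dL.1] at ha hbp2; exact absurd hbp2 (by rw [ha]; exact lt_irrefl _)
    -- Step I : x 0 < x (L-1)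
    have hI : x 0 < x (L-1) := by
      by_contra hc
      push_neg at hc
      have KA := C.K 0 (L-1) (Int.odd_iff.mpr (by omega))
      rw [show (0:ℤ)-1 = -1 from by norm_num, show (0:ℤ)+1 = 1 from by norm_num] at KA
      have hB : 0 ≤ (2 * x 0 - x (-1) - x 1) * (x (L-1) - x 0) :=
        mul_nonneg_np (by linarith) (by linarith)
      have hyA : y (L-1) < y 0 := by
        have hnA : ¬ 0 ≤ (2 * y 0 - y (-1) - y 1) * (y (L-1) - y 0) :=
          fun hA => KA ⟨hB, hA⟩
        have h2 := neg_of_mul_neg (not_le.mp hnA) (by linarith)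
        linarith
      have KB := C.K 1 (L-2) (Int.odd_iff.mpr (by omega))
      rw [show (1:ℤ)-1 = 0 from by norm_num, show (1:ℤ)+1 = 2 from by norm_num] at KB
      have hB2 : 0 ≤ (2 * y 1 - y 0 - y 2) * (y (L-2) - y 1) :=
        mul_nonneg_np (by linarith) (by linarith [dLm2.1])
      have hxB : x (L-2) < x 1 := by
        have hnA : ¬ 0 ≤ (2 * x 1 - x 0 - x 2) * (x (L-2) - x 1) :=
          fun hA => KB ⟨hA, hB2⟩
        have h2 := neg_of_mul_neg (not_le.mp hnA) (by linarith [d1.1])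
        linarith
      have KC := C.K (L-2) 1 (Int.odd_iff.mpr (by omega))
      rw [show L-2-1 = L-3 from by ring, show L-2+1 = L-1 from by ring] at KC
      have hB3 : 0 ≤ (2 * y (L-2) - y (L-3) - y (L-1)) * (y 1 - y (L-2)) :=
        mul_nonneg (by linarith [dLm3.2, dLm2.1]) (by linarith [dLm2.1])
      have hxC : x 1 < x (L-2) := by
        have hnA : ¬ 0 ≤ (2 * x (L-2) - x (L-3) - x (L-1)) * (x 1 - x (L-2)) :=
          fun hA => KC ⟨hA, hB3⟩
        have h2 := neg_of_mul_neg (not_le.mp hnA) (by linarith [dLm3.1, dLm2.2])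
        linarith
      linarith
    -- Step II : x 2 < x (L+1)
    have hII : x 2 < x (L+1) := by
      by_contra hc
      push_neg at hc
      have KD := C.K (L+1) 2 (Int.odd_iff.mpr (by omega))
      rw [show L+1-1 = L from by ring, show L+1+1 = L+2 from by ring] at KD
      have hB : 0 ≤ (2 * x (L+1) - x L - x (L+2)) * (x 2 - x (L+1)) :=
        mul_nonneg (by linarith [hbp1, dL.2]) (by linarith)
      have hyD : y 2 < y (L+1) := by
        have hnA : ¬ 0 ≤ (2 * y (L+1) - y L - y (L+2)) * (y 2 - y (L+1)) :=
          fun hA => KD ⟨hB, hA⟩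
        have h2 := neg_of_mul_neg (not_le.mp hnA) (by linarith [dL.1, hbp2])
        linarith
      have KE := C.K 3 L (Int.odd_iff.mpr (by omega))
      rw [show (3:ℤ)-1 = 2 from by norm_num, show (3:ℤ)+1 = 4 from by norm_num] at KE
      have hB2 : 0 ≤ (2 * y 3 - y 2 - y 4) * (y L - y 3) :=
        mul_nonneg (by linarith [d2.1, d3.2]) (by linarith [dL.1, d2.1, hyD])
      have hxE : x 3 < x L := by
        have hnA : ¬ 0 ≤ (2 * x 3 - x 2 - x 4) * (x L - x 3) :=
          fun hA => KE ⟨hA, hB2⟩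
        have h2 := pos_of_mul_neg (not_le.mp hnA) (by linarith [d3.1, d2.2])
        linarith
      have KF := C.K L 3 (Int.odd_iff.mpr (by omega))
      have hB3 : 0 ≤ (2 * y L - y (L-1) - y (L+1)) * (y 3 - y L) :=
        mul_nonneg_np (by linarith [dL.1, dLm1.2]) (by linarith [d2.1, hyD, dL.1])
      have hxF : x L < x 3 := by
        have hnA : ¬ 0 ≤ (2 * x L - x (L-1) - x (L+1)) * (x 3 - x L) :=
          fun hA => KF ⟨hA, hB3⟩
        have h2 := pos_of_mul_neg (not_le.mp hnA) (by linarith [dLm1.1, dL.2])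
        linarith
      linarith
    -- Endgame
    have KG := C.K 1 (L+2) (Int.odd_iff.mpr (by omega))
    rw [show (1:ℤ)-1 = 0 from by norm_num, show (1:ℤ)+1 = 2 from by norm_num] at KG
    have hBG : 0 ≤ (2 * x 1 - x 0 - x 2) * (x (L+2) - x 1) :=
      mul_nonneg (by linarith [d1.1]) (by linarith [hbp1, d1.1, hII])
    have hyG : y 1 < y (L+2) := by
      have hnA : ¬ 0 ≤ (2 * y 1 - y 0 - y 2) * (y (L+2) - y 1) :=
        fun hA => KG ⟨hBG, hA⟩
      have h2 := pos_of_mul_neg (not_le.mp hnA) (by linarith [d1.2])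
      linarith
    have KH := C.K L (-1) (Int.odd_iff.mpr (by omega))
    have hBH : 0 ≤ (2 * x L - x (L-1) - x (L+1)) * (x (-1) - x L) :=
      mul_nonneg_np (by linarith [dLm1.1, dL.2]) (by linarith [hbm1, hI, dLm1.1])
    have hyH : y L < y (-1) := by
      have hnA : ¬ 0 ≤ (2 * y L - y (L-1) - y (L+1)) * (y (-1) - y L) :=
        fun hA => KH ⟨hBH, hA⟩
      have h2 := pos_of_mul_neg (not_le.mp hnA) (by linarith [dL.1, dLm1.2])
      linarith
    linarith [hbm2, hH, hyG, hbp2, hyH, dL.1]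
  · -- L ≡ 2 (mod 4)
    have dLm1 := (dir (L-1) (by omega) (by omega)).2.1 (by omega)
    rw [show L-1+1 = L from by ring] at dLm1
    have dL := (dir L (by omega) le_rfl).2.2.1 h4
    have hcrL := C.negL
    unfold crX at hcrL
    rw [show L+1-1 = L from by ring, show L+1+1 = L+2 from by ring, one_mul, dL.1] at hcrL
    have hbp2 : y (L+1) < y (L+2) := by nlinarith [dL.2]
    have hbp1 : x (L+2) = x (L+1) := by
      have hax := C.axis (L+1)
      rw [show L+1+1 = L+2 from by ring] at hax
      rcases hax with ha | ha
      · exact ha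
      · rw [dL.1] at ha hbp2; exact absurd hbp2 (by rw [ha]; exact lt_irrefl _)
    have K1 := C.K 0 (L+1) (Int.odd_iff.mpr (by omega))
    rw [show (0:ℤ)-1 = -1 from by norm_num, show (0:ℤ)+1 = 1 from by norm_num] at K1
    have K2 := C.K (L+1) 0 (Int.odd_iff.mpr (by omega))
    rw [show L+1-1 = L from by ring, show L+1+1 = L+2 from by ring] at K2
    have hyL : y (L+1) < y 0 := by
      by_contra hc
      push_neg at hc
      have hB1 : 0 ≤ (2 * y 0 - y (-1) - y 1) * (y (L+1) - y 0) :=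
        mul_nonneg (by linarith) (by linarith)
      have hx1 : x 0 < x (L+1) := by
        have hnA : ¬ 0 ≤ (2 * x 0 - x (-1) - x 1) * (x (L+1) - x 0) :=
          fun hA => K1 ⟨hA, hB1⟩
        have h2 := pos_of_mul_neg (not_le.mp hnA) (by linarith)
        linarith
      have hB2 : 0 ≤ (2 * y (L+1) - y L - y (L+2)) * (y 0 - y (L+1)) :=
        mul_nonneg_np (by linarith [dL.1, hbp2]) (by linarith)
      have hx2 : x (L+1) < x 0 := by
        have hnA : ¬ 0 ≤ (2 * x (L+1) - x L - x (L+2)) * (x 0 - x (L+1)) :=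
          fun hA => K2 ⟨hA, hB2⟩
        have h2 := pos_of_mul_neg (not_le.mp hnA) (by linarith [hbp1, dL.2])
        linarith
      linarith
    have K3 := C.K 1 L (Int.odd_iff.mpr (by omega))
    rw [show (1:ℤ)-1 = 0 from by norm_num, show (1:ℤ)+1 = 2 from by norm_num] at K3
    have hB3 : 0 ≤ (2 * y 1 - y 0 - y 2) * (y L - y 1) :=
      mul_nonneg_np (by linarith) (by linarith [dL.1, hyL])
    have hx3 : x L < x 1 := by
      have hnA : ¬ 0 ≤ (2 * x 1 - x 0 - x 2) * (x L - x 1) :=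
        fun hA => K3 ⟨hA, hB3⟩
      have h2 := neg_of_mul_neg (not_le.mp hnA) (by linarith [d1.1])
      linarith
    have K4 := C.K L 1 (Int.odd_iff.mpr (by omega))
    have hB4 : 0 ≤ (2 * y L - y (L-1) - y (L+1)) * (y 1 - y L) :=
      mul_nonneg (by linarith [dLm1.2, dL.1]) (by linarith [dL.1, hyL, hH])
    have hx4 : x 1 < x L := by
      have hnA : ¬ 0 ≤ (2 * x L - x (L-1) - x (L+1)) * (x 1 - x L) :=
        fun hA => K4 ⟨hA, hB4⟩
      have h2 := neg_of_mul_neg (not_le.mp hnA) (by linarith [dLm1.1, dL.2])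
      linarith
    linarith

lemma crX_swap (x y : ℤ → ℤ) (p : ℤ) : crX y x p = - crX x y p := by unfold crX; ring

lemma crX_negy (x y : ℤ → ℤ) (p : ℤ) : crX x (fun q => - y q) p = - crX x y p := by
  unfold crX; ring

lemma crX_negneg (x y : ℤ → ℤ) (p : ℤ) :
    crX (fun q => - x q) (fun q => - y q) p = crX x y p := by unfold crX; ring

lemma Cfg.swap {L s : ℤ} {x y : ℤ → ℤ} (C : Cfg L s x y) : Cfg L (-s) y x where
  axis p := (C.axis p).symm
  pos p h1 h2 := by rw [crX_swap]; nlinarith [C.pos p h1 h2]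
  neg0 := by rw [crX_swap]; nlinarith [C.neg0]
  negL := by rw [crX_swap]; nlinarith [C.negL]
  K p q h := fun ⟨h1, h2⟩ => C.K p q h ⟨h2, h1⟩

lemma Cfg.negy {L s : ℤ} {x y : ℤ → ℤ} (C : Cfg L s x y) :
    Cfg L (-s) x (fun p => - y p) where
  axis p := (C.axis p).imp id neg_inj.mpr
  pos p h1 h2 := by rw [crX_negy]; nlinarith [C.pos p h1 h2]
  neg0 := by rw [crX_negy]; nlinarith [C.neg0]
  negL := by rw [crX_negy]; nlinarith [C.negL]
  K p q h := by
    intro ⟨h1, h2⟩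
    refine C.K p q h ⟨h1, ?_⟩
    try dsimp only at h2
    nlinarith [h2]

lemma Cfg.negneg {L s : ℤ} {x y : ℤ → ℤ} (C : Cfg L s x y) :
    Cfg L s (fun p => - x p) (fun p => - y p) where
  axis p := (C.axis p).imp neg_inj.mpr neg_inj.mpr
  pos p h1 h2 := by rw [crX_negneg]; exact C.pos p h1 h2
  neg0 := by rw [crX_negneg]; exact C.neg0
  negL := by rw [crX_negneg]; exact C.negL
  K p q h := by
    intro ⟨h1, h2⟩
    try dsimp only at h1 h2
    refine C.K p q h ⟨by nlinarith [h1], by nlinarith [h2]⟩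

lemma core_posH {L : ℤ} {x y : ℤ → ℤ} (hL2 : 2 ≤ L) (hLmod : L % 2 = 0)
    (C : Cfg L 1 x y) (hH : y 1 = y 0) : False := by
  rcases lt_trichotomy (x 0) (x 1) with h | h | h
  · exact core_norm hL2 hLmod C hH h
  · have h0 := C.neg0
    unfold crX at h0
    norm_num at h0
    rw [hH, ← h] at h0
    nlinarith
  · have C' := C.negneg
    refine core_norm hL2 hLmod C' ?_ ?_
    · show -y 1 = -y 0; rw [hH]
    · show -x 0 < -x 1; omega

lemma core_pos {L : ℤ} {x y : ℤ → ℤ} (hL2 : 2 ≤ L) (hLmod : L % 2 = 0)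
    (C : Cfg L 1 x y) : False := by
  have hax := C.axis 0
  norm_num at hax
  rcases hax with h | h
  · have C' := (C.swap).negy
    simp only [neg_neg] at C'
    exact core_posH hL2 hLmod C' (show -x 1 = -x 0 by rw [h])
  · exact core_posH hL2 hLmod C h

lemma core_any {L : ℤ} {x y : ℤ → ℤ} (hL2 : 2 ≤ L) (hLmod : L % 2 = 0)
    (s : ℤ) (hs : s = 1 ∨ s = -1) (C : Cfg L s x y) : False := by
  rcases hs with rfl | rfl
  · exact core_pos hL2 hLmod C
  · have C' := C.negy
    simp only [neg_neg] at C'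
    exact core_pos hL2 hLmod C'

lemma nonpos_right' {a b : ℤ} (h : 0 ≤ a * b) (ha : a < 0) : b ≤ 0 := by
  by_contra hb
  push_neg at hb
  exact absurd (mul_neg_of_neg_of_pos ha hb) (not_lt.mpr h)

lemma nonneg_right' {a b : ℤ} (h : 0 ≤ a * b) (ha : 0 < a) : 0 ≤ b := by
  by_contra hb
  push_neg at hb
  exact absurd (mul_neg_of_pos_of_neg ha hb) (not_lt.mpr h)

lemma forced {S T : Set (ℤ × ℤ)} (hconv : ∀ z ∈ S, ∃ q : Fin 4, Zq q z ∩ T = ∅)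
    {c h v p : ℤ × ℤ} (hc : c ∈ S) (hh : h ∈ T) (hv : v ∈ T) (hp : p ∈ T)
    (hhy : h.2 = c.2) (hhx : h.1 ≠ c.1) (hvx : v.1 = c.1) (hvy : v.2 ≠ c.2) :
    ¬(0 ≤ (c.1 - h.1) * (p.1 - c.1) ∧ 0 ≤ (c.2 - v.2) * (p.2 - c.2)) := by
  rintro ⟨hA, hB⟩
  obtain ⟨q, hq⟩ := hconv c hc
  have hqh : h ∉ Zq q c := fun hmem => Set.eq_empty_iff_forall_notMem.mp hq h ⟨hmem, hh⟩
  have hqv : v ∉ Zq q c := fun hmem => Set.eq_empty_iff_forall_notMem.mp hq v ⟨hmem, hv⟩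
  have hqp : p ∉ Zq q c := fun hmem => Set.eq_empty_iff_forall_notMem.mp hq p ⟨hmem, hp⟩
  fin_cases q <;>
    simp only [Zq, Set.mem_setOf_eq, not_and, not_le] at hqh hqv hqp
  · -- Z0 : x ≤, y ≤
    have h1 : c.1 < h.1 := by
      by_contra hx
      push_neg at hx
      exact absurd (hqh hx) (by rw [hhy]; exact lt_irrefl _)
    have h2 : c.2 < v.2 := hqv (le_of_eq hvx)
    exact absurd (hqp (by linarith [nonpos_right' hA (by linarith)]))
      (not_lt.mpr (by linarith [nonpos_right' hB (by linarith)]))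
  · -- Z1 : x ≥, y ≤
    have h1 : h.1 < c.1 := by
      by_contra hx
      push_neg at hx
      exact absurd (hqh hx) (by rw [hhy]; exact lt_irrefl _)
    have h2 : c.2 < v.2 := hqv (le_of_eq hvx.symm)
    exact absurd (hqp (by linarith [nonneg_right' hA (by linarith)]))
      (not_lt.mpr (by linarith [nonpos_right' hB (by linarith)]))
  · -- Z2 : x ≥, y ≥
    have h1 : h.1 < c.1 := by
      by_contra hx
      push_neg at hx
      exact absurd (hqh hx) (by rw [hhy]; exact lt_irrefl _)
    have h2 : v.2 < c.2 := hqv (le_of_eq hvx.symm)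
    exact absurd (hqp (by linarith [nonneg_right' hA (by linarith)]))
      (not_lt.mpr (by linarith [nonneg_right' hB (by linarith)]))
  · -- Z3 : x ≤, y ≥
    have h1 : c.1 < h.1 := by
      by_contra hx
      push_neg at hx
      exact absurd (hqh hx) (by rw [hhy]; exact lt_irrefl _)
    have h2 : v.2 < c.2 := hqv (le_of_eq hvx)
    exact absurd (hqp (by linarith [nonpos_right' hA (by linarith)]))
      (not_lt.mpr (by linarith [nonneg_right' hB (by linarith)]))


section SpiralBridge

variable {m : ℕ} {w : ZMod m → ℤ × ℤ}

lemma spiralK (hw : IsClosedSquaredSpiral w)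
    (hconv : IsHvConvexSwitching (spiralEven w) (spiralOdd w))
    (hdvd : 2 ∣ m) {i j : ZMod m}
    (hij : (ZMod.castHom hdvd (ZMod 2)) i ≠ (ZMod.castHom hdvd (ZMod 2)) j) :
    ¬(0 ≤ (2*(w i).1 - (w (i-1)).1 - (w (i+1)).1) * ((w j).1 - (w i).1) ∧
      0 ≤ (2*(w i).2 - (w (i-1)).2 - (w (i+1)).2) * ((w j).2 - (w i).2)) := by
  have hNZ : NeZero m := ⟨by have := hw.four_le; omega⟩
  set π := ZMod.castHom hdvd (ZMod 2) with hπ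
  have hev : ∀ k : ZMod m, π k = 0 ↔ Even k.val := by
    intro k
    rw [hπ, ZMod.castHom_apply, ← ZMod.natCast_val, ZMod.natCast_eq_zero_iff,
      Nat.even_iff]
    omega
  have hzo : ∀ z : ZMod 2, z = 0 ∨ z = 1 := by
    intro z
    fin_cases z
    · exact Or.inl rfl
    · exact Or.inr rfl
  have hsub : ∀ k : ZMod m, (k - 1) + 1 = k := fun k => sub_add_cancel k 1
  by_cases hiE : Even i.val
  · -- i is even : free quadrant avoids spiralOdd
    have hi0 : π i = 0 := (hev i).mpr hiE
    have hip : π (i+1) = 1 := by rw [map_add, hi0, map_one, zero_add]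
    have him : π (i-1) = 1 := by
      rw [sub_eq_add_neg, map_add, hi0, map_neg, map_one, zero_add]
      decide
    have hjp : π j = 1 := by
      rcases hzo (π j) with h | h
      · exact absurd (hi0.trans h.symm) hij
      · exact h
    have hipO : ¬ Even (i+1).val := fun h => by
      rw [(hev _).mpr h] at hip; exact absurd hip (by decide)
    have himO : ¬ Even (i-1).val := fun h => by
      rw [(hev _).mpr h] at him; exact absurd him (by decide)
    have hjO : ¬ Even j.val := fun h => by
      rw [(hev _).mpr h] at hjp; exact absurd hjp (by decide)
    obtain ⟨hhy, hhx⟩ := hw.horiz i hiE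
    have hvert := hw.vert (i-1) himO
    rw [hsub i] at hvert
    obtain ⟨hvx, hvy⟩ := hvert
    intro ⟨hA, hB⟩
    have e1 : 2*(w i).1 - (w (i-1)).1 - (w (i+1)).1 = (w i).1 - (w (i+1)).1 := by
      rw [← hvx]; ring
    have e2 : 2*(w i).2 - (w (i-1)).2 - (w (i+1)).2 = (w i).2 - (w (i-1)).2 := by
      rw [hhy]; ring
    rw [e1] at hA
    rw [e2] at hB
    exact forced hconv.2.1 ⟨i, hiE, rfl⟩ ⟨i+1, hipO, rfl⟩ ⟨i-1, himO, rfl⟩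
      ⟨j, hjO, rfl⟩ hhy hhx hvx.symm (fun h => hvy h.symm) ⟨hA, hB⟩
  · -- i is odd : free quadrant avoids spiralEven
    have hi1 : π i = 1 := by
      rcases hzo (π i) with h | h
      · exact absurd ((hev i).mp h) hiE
      · exact h
    have hip : π (i+1) = 0 := by
      rw [map_add, hi1, map_one]; decide
    have him : π (i-1) = 0 := by
      rw [sub_eq_add_neg, map_add, hi1, map_neg, map_one]; decide
    have hjp : π j = 0 := by
      rcases hzo (π j) with h | h
      · exact h
      · exact absurd (hi1.trans h.symm) hij
    have hipE : Even (i+1).val := (hev _).mp hip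
    have himE : Even (i-1).val := (hev _).mp him
    have hjE : Even j.val := (hev _).mp hjp
    have hhoriz := hw.horiz (i-1) himE
    rw [hsub i] at hhoriz
    obtain ⟨hhy, hhx⟩ := hhoriz
    obtain ⟨hvx, hvy⟩ := hw.vert i hiE
    intro ⟨hA, hB⟩
    have e1 : 2*(w i).1 - (w (i-1)).1 - (w (i+1)).1 = (w i).1 - (w (i-1)).1 := by
      rw [hvx]; ring
    have e2 : 2*(w i).2 - (w (i-1)).2 - (w (i+1)).2 = (w i).2 - (w (i+1)).2 := by
      rw [← hhy]; ring
    rw [e1] at hA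
    rw [e2] at hB
    exact forced hconv.2.2 ⟨i, hiE, rfl⟩ ⟨i-1, himE, rfl⟩ ⟨i+1, hipE, rfl⟩
      ⟨j, hjE, rfl⟩ hhy.symm (fun h => hhx h.symm) hvx hvy ⟨hA, hB⟩

end SpiralBridge

/-- in a curl whose associated pair is an hv-convex switching, every maximal
run of consecutive equally-oriented vertices has odd length. -/
theorem stmt11 (m : ℕ) (w : ZMod m → ℤ × ℤ) (hw : IsClosedSquaredSpiral w)
    (hcurl : ¬ IsWindow w)
    (hconv : IsHvConvexSwitching (spiralEven w) (spiralOdd w))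
    (a : ZMod m) (L : ℕ) (hL1 : 1 ≤ L) (hLm : L < m)
    (hrun : ∀ k : ℕ, k < L → 0 < turn w (a + (k : ZMod m)) * turn w a)
    (hprev : turn w (a - 1) * turn w a < 0)
    (hnext : turn w (a + (L : ZMod m)) * turn w a < 0) :
    Odd L := by
  rcases Nat.even_or_odd L with hE | hO
  · exfalso
    have hNZ : NeZero m := ⟨by have := hw.four_le; omega⟩
    have hdvd : 2 ∣ m := by
      obtain ⟨c, hc⟩ := hw.even_m
      exact ⟨c, by omega⟩
    obtain ⟨c, hc⟩ := hE
    have hL2 : 2 ≤ (L:ℤ) := by omega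
    have hLmod : (L:ℤ) % 2 = 0 := by omega
    have hta0 := hrun 0 hL1
    rw [Nat.cast_zero, add_zero] at hta0
    -- choose the sign of the run
    have hsign : ∃ s : ℤ, (s = 1 ∨ s = -1) ∧ (∀ t : ℤ, 0 < t * turn w a → 0 < s * t) ∧
        (∀ t : ℤ, t * turn w a < 0 → s * t < 0) := by
      rcases lt_trichotomy (turn w a) 0 with hlt | heq | hgt
      · refine ⟨-1, Or.inr rfl, fun t ht => ?_, fun t ht => ?_⟩
        · have htneg : t < 0 := by
            by_contra h
            push_neg at h
            nlinarith
          linarith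
        · have htpos : 0 < t := by
            by_contra h
            push_neg at h
            nlinarith
          linarith
      · rw [heq] at hta0; nlinarith
      · refine ⟨1, Or.inl rfl, fun t ht => ?_, fun t ht => ?_⟩
        · have htpos : 0 < t := by
            by_contra h
            push_neg at h
            nlinarith
          linarith
        · have htneg : t < 0 := by
            by_contra h
            push_neg at h
            nlinarith
          linarith
    obtain ⟨s, hs, hpos', hneg'⟩ := hsign
    have idxp : ∀ p : ℤ, a - 1 + ((p + 1 : ℤ) : ZMod m) = (a - 1 + (p : ZMod m)) + 1 := by
      intro p; push_cast; ring
    have idxm : ∀ p : ℤ, a - 1 + ((p - 1 : ℤ) : ZMod m) = (a - 1 + (p : ZMod m)) - 1 := by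
      intro p; push_cast; ring
    have crT : ∀ p : ℤ, crX (fun r : ℤ => (w (a - 1 + (r : ZMod m))).1)
        (fun r : ℤ => (w (a - 1 + (r : ZMod m))).2) p = turn w (a - 1 + (p : ZMod m)) := by
      intro p
      unfold crX turn
      dsimp only
      rw [idxp p, idxm p]
    refine core_any (L := (L:ℤ)) hL2 hLmod s hs
      (x := fun r : ℤ => (w (a - 1 + (r : ZMod m))).1)
      (y := fun r : ℤ => (w (a - 1 + (r : ZMod m))).2) ⟨?_, ?_, ?_, ?_, ?_⟩
    · -- axis
      intro p
      rw [idxp p]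
      by_cases hiE : Even (a - 1 + (p : ZMod m)).val
      · exact Or.inr (hw.horiz _ hiE).1
      · exact Or.inl (hw.vert _ hiE).1
    · -- run turns
      intro p h1 h2
      rw [crT p]
      apply hpos'
      have hk := hrun (p-1).toNat (by omega)
      have e : a + (((p-1).toNat : ℕ) : ZMod m) = a - 1 + (p : ZMod m) := by
        rw [show (((p-1).toNat : ℕ) : ZMod m) = ((p - 1 : ℤ) : ZMod m) from by
          rw [← Int.cast_natCast]; congr 1; omega]
        push_cast
        ring
      rwa [e] at hk
    · -- turn before the run
      rw [crT 0]
      apply hneg'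
      have e : a - 1 + ((0:ℤ) : ZMod m) = a - 1 := by push_cast; ring
      rwa [e]
    · -- turn after the run
      rw [crT ((L:ℤ)+1)]
      apply hneg'
      have e : a - 1 + (((L:ℤ) + 1 : ℤ) : ZMod m) = a + ((L:ℕ) : ZMod m) := by
        push_cast
        ring
      rwa [e]
    · -- the hv-convexity constraints
      intro p q hpq
      rw [idxp p, idxm p]
      apply spiralK hw hconv hdvd
      intro hcontra
      have e : (a - 1 + (p : ZMod m)) - (a - 1 + (q : ZMod m)) = ((p - q : ℤ) : ZMod m) := by
        push_cast
        ring
      have h0 : ((p - q : ℤ) : ZMod 2) = 0 := by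
        rw [← map_intCast (ZMod.castHom hdvd (ZMod 2)) (p - q), ← e, map_sub, hcontra, sub_self]
      have h1 : ((p - q : ℤ) : ZMod 2) = 1 := by
        obtain ⟨d, hd⟩ := hpq
        rw [hd]
        push_cast
        rw [show (2 : ZMod 2) = 0 from by decide]
        ring
      rw [h0] at h1
      exact absurd h1 (by decide)
  · exact hO
end
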